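/- arXiv:1203.5609 — 6 statements merged into one kernel-verified Lean document; each statement's English description precedes it below -/
import Mathlib

section
/- For vectors x, y ∈ ℝ³ with x·x ∈ {1, -1} (Minkowski inner product x·y = x⁰y⁰ - x¹y¹ - x²y²) and x·y = 0, the two-dimensional subspace h = span{x^a P_a, x^a J_a + y^a P_a} of iso(2,1) is an abelian Lie subalgebra. -/
open Real BigOperators Finset

noncomputable section

/-- Vectors in ℝ³. -/
abbrev V3 : Type := Fin 3 → ℝ

/-- Minkowski metric η = diag(1,-1,-1). -/
def ηm : Fin 3 → ℝ := ![1, -1, -1]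

/-- Totally antisymmetric symbol with ε₀₁₂ = 1. -/
def eps : Fin 3 → Fin 3 → Fin 3 → ℝ := fun a b c =>
  if (a, b, c) = ((0 : Fin 3), (1 : Fin 3), (2 : Fin 3)) ∨ (a, b, c) = (1, 2, 0) ∨ (a, b, c) = (2, 0, 1) then 1
  else if (a, b, c) = ((0 : Fin 3), (2 : Fin 3), (1 : Fin 3)) ∨ (a, b, c) = (2, 1, 0) ∨ (a, b, c) = (1, 0, 2) then -1
  else 0

/-- An element of iso(2,1) is encoded by its J-coefficients and P-coefficients:
`(j, p)` represents `Σ j^a J_a + Σ p^a P_a`. -/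
abbrev iso21 : Type := V3 × V3

def Jvec (x : V3) : iso21 := (x, 0)
def Pvec (x : V3) : iso21 := (0, x)
def Jb (a : Fin 3) : iso21 := Jvec (fun i => if i = a then 1 else 0)
def Pb (a : Fin 3) : iso21 := Pvec (fun i => if i = a then 1 else 0)

/-- The Lie bracket of iso(2,1): [J_a,J_b] = ε_{ab}^c J_c, [J_a,P_b] = ε_{ab}^c P_c,
[P_a,P_b] = 0, with ε_{ab}^c = η^{cc} ε_{abc}. -/
def br (x y : iso21) : iso21 :=
  (fun c => ∑ a, ∑ b, x.1 a * y.1 b * (ηm c * eps a b c),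
   fun c => ∑ a, ∑ b, (x.1 a * y.2 b + x.2 a * y.1 b) * (ηm c * eps a b c))

/-- The Ad-invariant pairing ⟨J_a,P_b⟩ = η_{ab}, ⟨J,J⟩ = ⟨P,P⟩ = 0. -/
def pairing (x y : iso21) : ℝ := ∑ a, ηm a * (x.1 a * y.2 a + x.2 a * y.1 a)

/-- Minkowski inner product on ℝ³. -/
def mdot (x y : V3) : ℝ := ∑ a, ηm a * x a * y a

/-- Lorentzian cross product (x∧y)^a = ε^{abc} x_b y_c. -/
def crossL (x y : V3) : V3 := fun a => ηm a * ∑ b, ∑ c, eps a b c * x b * y c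

/-- Index set of the basis {J_a, P_a}: `false` ↦ J, `true` ↦ P. -/
abbrev Bas : Type := Bool × Fin 3

def basis : Bas → iso21 := fun p => if p.1 then Pb p.2 else Jb p.2
def coeff (x : iso21) (p : Bas) : ℝ := if p.1 then x.2 p.2 else x.1 p.2

/-- 2-tensors and 3-tensors over iso(2,1), given by their coefficients in the basis. -/
abbrev TT2 : Type := Bas → Bas → ℝ
abbrev TT3 : Type := Bas → Bas → Bas → ℝ

def tens (x y : iso21) : TT2 := fun μ ν => coeff x μ * coeff y ν

/-- Structure constants: coefficient of `[T_a, T_c]` on `T_m`. -/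
def Cstr (a c m : Bas) : ℝ := coeff (br (basis a) (basis c)) m

/-- The mixed Yang-Baxter expression [[r,s]] = [r₁₂,s₁₃] + [r₁₂,s₂₃] + [r₁₃,s₂₃]. -/
def YB2 (r s : TT2) : TT3 := fun μ ν lam =>
    (∑ a, ∑ c, r a ν * s c lam * Cstr a c μ)
  + (∑ b, ∑ c, r μ b * s c lam * Cstr b c ν)
  + (∑ b, ∑ d, r μ b * s ν d * Cstr b d lam)

/-- The action of X on a 2-tensor: [X⊗1 + 1⊗X, r]. -/
def act2 (x : iso21) (r : TT2) : TT2 := fun μ ν =>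
  (∑ a, r a ν * coeff (br x (basis a)) μ) + (∑ b, r μ b * coeff (br x (basis b)) ν)

/-- The classical r-matrix r = P_a ⊗ J^a. -/
def rPJ : TT2 := fun μ ν => ∑ a, ηm a * tens (Pb a) (Jb a) μ ν

/-- The symmetric part r_S = ½(P_a⊗J^a + J^a⊗P_a). -/
def rSym : TT2 := fun μ ν => (1/2) * ∑ a, ηm a * (tens (Pb a) (Jb a) μ ν + tens (Jb a) (Pb a) μ ν)

/-- The classical dynamical Yang-Baxter equation at (ψ,α) with dynamical elements
x₁ (paired with ψ) and x₂ (paired with α). -/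
def CDYBEat (r : ℝ → ℝ → TT2) (x1 x2 : ℝ → ℝ → iso21) (ψ α : ℝ) : Prop :=
  ∀ μ ν lam : Bas, YB2 (r ψ α) (r ψ α) μ ν lam =
      coeff (x1 ψ α) μ * deriv (fun s => r s α ν lam) ψ
    - coeff (x1 ψ α) ν * deriv (fun s => r s α μ lam) ψ
    + coeff (x1 ψ α) lam * deriv (fun s => r s α μ ν) ψ
    + coeff (x2 ψ α) μ * deriv (fun s => r ψ s ν lam) α
    - coeff (x2 ψ α) ν * deriv (fun s => r ψ s μ lam) α
    + coeff (x2 ψ α) lam * deriv (fun s => r ψ s μ ν) α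

/-- Adjoint action of a Lorentz matrix g on iso(2,1). -/
def adL (g : Matrix (Fin 3) (Fin 3) ℝ) (x : iso21) : iso21 := (g.mulVec x.1, g.mulVec x.2)

/-- Adjoint action of a translation t on iso(2,1): J_a ↦ J_a + ε_{ab}^c t^b P_c, P_a ↦ P_a. -/
def adT (t : V3) (x : iso21) : iso21 :=
  (x.1, fun c => x.2 c + ∑ a, ∑ b, x.1 a * t b * (ηm c * eps a b c))

/-- The proper orthochronous Lorentz group SO⁺(2,1) as 3×3 matrices. -/
def SOplus : Set (Matrix (Fin 3) (Fin 3) ℝ) :=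
  {g | g.transpose * Matrix.diagonal ηm * g = Matrix.diagonal ηm ∧ g.det = 1 ∧ 0 < g 0 0}

/-- The induced action of a linear map on 2-tensors, A⊗A. -/
def Ad2 (A : iso21 → iso21) (r : TT2) : TT2 :=
  fun μ ν => ∑ a : Bas, ∑ b : Bas, r a b * coeff (A (basis a)) μ * coeff (A (basis b)) ν

/-- r(ψ,α) = P_a⊗J^a - V^{bc}(ψ)(P_b⊗J_c - J_c⊗P_b) + ε^{bcd} m_d(ψ,α) P_b⊗P_c. -/
def rVm (V : ℝ → Matrix (Fin 3) (Fin 3) ℝ) (m : ℝ → ℝ → V3) (ψ α : ℝ) : TT2 := fun μ ν =>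
  rPJ μ ν
  - (∑ b, ∑ c, V ψ b c * (tens (Pb b) (Jb c) μ ν - tens (Jb c) (Pb b) μ ν))
  + ∑ b, ∑ c, ∑ d, ηm b * ηm c * eps b c d * m ψ α d * tens (Pb b) (Pb c) μ ν

/-- The vector w defined by ε^{abc} w_c = V^{ab} - V^{ba}. -/
def wOf (V : ℝ → Matrix (Fin 3) (Fin 3) ℝ) (ψ : ℝ) : V3 := fun c =>
  (1/2) * ∑ a, ∑ b, ηm a * ηm b * eps a b c * (V ψ a b - V ψ b a)

/-- CDYBE condition (i) at (ψ,α), componentwise in (a,b,c). -/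
def Cond1At (V : ℝ → Matrix (Fin 3) (Fin 3) ℝ) (m : ℝ → ℝ → V3) (qψ qα : ℝ → V3)
    (ψ α : ℝ) : Prop :=
  ∀ a b c : Fin 3,
    qα ψ a * (∑ d, ηm b * ηm c * eps b c d * deriv (fun s => m ψ s d) α)
    - qψ ψ b * deriv (fun s => V s c a) ψ
    + qψ ψ c * deriv (fun s => V s b a) ψ
    - (∑ d, ∑ g, V ψ b d * V ψ c g * (ηm a * eps d g a))
    - (∑ d, ∑ g, V ψ d a * V ψ c g * (ηm b * eps d g b))
    + (∑ d, ∑ g, V ψ d a * V ψ b g * (ηm c * eps d g c))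
    - (∑ d, V ψ d a * (ηm b * ηm c * eps b c d)) = 0

/-- CDYBE condition (ii) at (ψ,α): q_ψ·∂_ψ m + q_θ·∂_α m + w·m = 0. -/
def Cond2At (V : ℝ → Matrix (Fin 3) (Fin 3) ℝ) (m : ℝ → ℝ → V3) (qψ : ℝ → V3)
    (qθ : ℝ → ℝ → V3) (ψ α : ℝ) : Prop :=
  mdot (qψ ψ) (fun a => deriv (fun s => m s α a) ψ)
  + mdot (qθ ψ α) (fun a => deriv (fun s => m ψ s a) α)
  + mdot (wOf V ψ) (m ψ α) = 0

def wedgeT (x y : iso21) : TT2 := fun μ ν => tens x y μ ν - tens y x μ ν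

/-- The standard dynamical r-matrix for the Cartan subalgebra span{J₀,P₀}. -/
def ra (ψ α : ℝ) : TT2 := fun μ ν =>
  rSym μ ν + (1/2) * Real.tan (ψ/2) * (wedgeT (Pb 1) (Jb 2) μ ν - wedgeT (Pb 2) (Jb 1) μ ν)
  + α / (4 * (Real.cos (ψ/2))^2) * wedgeT (Pb 1) (Pb 2) μ ν

/-- The standard dynamical r-matrix for the Cartan subalgebra span{J₁,P₁}. -/
def rb (ψ α : ℝ) : TT2 := fun μ ν =>
  rSym μ ν + (1/2) * Real.tanh (ψ/2) * (wedgeT (Pb 2) (Jb 0) μ ν - wedgeT (Pb 0) (Jb 2) μ ν)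
  + α / (4 * (Real.cosh (ψ/2))^2) * wedgeT (Pb 2) (Pb 0) μ ν

/-- for x,y ∈ ℝ³ with x·x ∈ {1,-1} and x·y = 0, the subspace
span{x^a P_a, x^a J_a + y^a P_a} of iso(2,1) is an abelian Lie subalgebra. -/
theorem stmt1 (x y : V3) (hx : mdot x x = 1 ∨ mdot x x = -1) (hxy : mdot x y = 0) :
    ∀ u ∈ Submodule.span ℝ ({Pvec x, Jvec x + Pvec y} : Set iso21),
      ∀ v ∈ Submodule.span ℝ ({Pvec x, Jvec x + Pvec y} : Set iso21),
        br u v = 0 := by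
  intro u hu v hv
  rw [Submodule.mem_span_pair] at hu hv
  obtain ⟨a, b, rfl⟩ := hu
  obtain ⟨c, d, rfl⟩ := hv
  refine Prod.ext ?_ ?_ <;> funext i <;> fin_cases i <;>
    simp [br, Pvec, Jvec, eps, ηm, Fin.sum_univ_succ, Prod.smul_def] <;> ring
end
end

section
/- The subspace span{P_0, J_0} of iso(2,1) is a self-normalizing abelian (hence Cartan) subalgebra, and likewise span{P_1, J_1} is a self-normalizing abelian subalgebra. -/
open Real BigOperators Finset

noncomputable section

/-- span{P₀,J₀} and span{P₁,J₁} are self-normalizing abelian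
(hence Cartan) subalgebras of iso(2,1). -/
theorem stmt3 :
    ((∀ u ∈ Submodule.span ℝ ({Pb 0, Jb 0} : Set iso21),
        ∀ v ∈ Submodule.span ℝ ({Pb 0, Jb 0} : Set iso21), br u v = 0) ∧
     (∀ z : iso21,
        (∀ u ∈ Submodule.span ℝ ({Pb 0, Jb 0} : Set iso21),
          br z u ∈ Submodule.span ℝ ({Pb 0, Jb 0} : Set iso21)) →
        z ∈ Submodule.span ℝ ({Pb 0, Jb 0} : Set iso21))) ∧
    ((∀ u ∈ Submodule.span ℝ ({Pb 1, Jb 1} : Set iso21),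
        ∀ v ∈ Submodule.span ℝ ({Pb 1, Jb 1} : Set iso21), br u v = 0) ∧
     (∀ z : iso21,
        (∀ u ∈ Submodule.span ℝ ({Pb 1, Jb 1} : Set iso21),
          br z u ∈ Submodule.span ℝ ({Pb 1, Jb 1} : Set iso21)) →
        z ∈ Submodule.span ℝ ({Pb 1, Jb 1} : Set iso21))) := by
  constructor <;> constructor
  case left.left =>
    intro u hu v hv
    rw [Submodule.mem_span_pair] at hu hv
    obtain ⟨c, d, rfl⟩ := hu
    obtain ⟨c', d', rfl⟩ := hv
    refine Prod.ext ?_ ?_ <;> funext e <;> fin_cases e <;>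
      simp [br, Pb, Jb, Pvec, Jvec, Fin.sum_univ_three, eps, ηm]
  case left.right =>
    intro z h
    have hP := h (Pb 0) (Submodule.subset_span (by simp))
    have hJ := h (Jb 0) (Submodule.subset_span (by simp))
    rw [Submodule.mem_span_pair] at hP hJ ⊢
    obtain ⟨c, d, hcd⟩ := hP
    obtain ⟨c', d', hcd'⟩ := hJ
    have e1 : (c • Pb 0 + d • Jb 0 : iso21).2 1 = (br z (Pb 0)).2 1 := by rw [hcd]
    have e2 : (c • Pb 0 + d • Jb 0 : iso21).2 2 = (br z (Pb 0)).2 2 := by rw [hcd]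
    have e3 : (c' • Pb 0 + d' • Jb 0 : iso21).2 1 = (br z (Jb 0)).2 1 := by rw [hcd']
    have e4 : (c' • Pb 0 + d' • Jb 0 : iso21).2 2 = (br z (Jb 0)).2 2 := by rw [hcd']
    simp [br, Pb, Jb, Pvec, Jvec, Fin.sum_univ_three, eps, ηm] at e1 e2 e3 e4
    refine ⟨z.2 0, z.1 0, ?_⟩
    refine Prod.ext ?_ ?_ <;> funext e <;> fin_cases e <;>
      simp [Pb, Jb, Pvec, Jvec, e1, e2.symm, e3, e4.symm]
  case right.left =>
    intro u hu v hv
    rw [Submodule.mem_span_pair] at hu hv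
    obtain ⟨c, d, rfl⟩ := hu
    obtain ⟨c', d', rfl⟩ := hv
    refine Prod.ext ?_ ?_ <;> funext e <;> fin_cases e <;>
      simp [br, Pb, Jb, Pvec, Jvec, Fin.sum_univ_three, eps, ηm]
  case right.right =>
    intro z h
    have hP := h (Pb 1) (Submodule.subset_span (by simp))
    have hJ := h (Jb 1) (Submodule.subset_span (by simp))
    rw [Submodule.mem_span_pair] at hP hJ ⊢
    obtain ⟨c, d, hcd⟩ := hP
    obtain ⟨c', d', hcd'⟩ := hJ
    have e1 : (c • Pb 1 + d • Jb 1 : iso21).2 0 = (br z (Pb 1)).2 0 := by rw [hcd]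
    have e2 : (c • Pb 1 + d • Jb 1 : iso21).2 2 = (br z (Pb 1)).2 2 := by rw [hcd]
    have e3 : (c' • Pb 1 + d' • Jb 1 : iso21).2 0 = (br z (Jb 1)).2 0 := by rw [hcd']
    have e4 : (c' • Pb 1 + d' • Jb 1 : iso21).2 2 = (br z (Jb 1)).2 2 := by rw [hcd']
    simp [br, Pb, Jb, Pvec, Jvec, Fin.sum_univ_three, eps, ηm] at e1 e2 e3 e4
    refine ⟨z.2 1, z.1 1, ?_⟩
    refine Prod.ext ?_ ?_ <;> funext e <;> fin_cases e <;>
      simp_all [Pb, Jb, Pvec, Jvec]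
end
end

section
/- There is no element g of the group ISO(2,1) = SO⁺(2,1) ⋉ ℝ³ whose adjoint action on iso(2,1) maps the Cartan subalgebra span{P_0, J_0} onto the Cartan subalgebra span{P_1, J_1}. -/
open Real BigOperators Finset

noncomputable section

/- The translation part acts trivially on the P's, so g would have to map the timelike P₀ to a
multiple of the spacelike P₁; this contradicts the invariance of the Minkowski form. -/

open Matrix

lemma Pb_eq_Pvec (a : Fin 3) : Pb a = Pvec (Pi.single a 1) := by
  ext i <;> simp [Pb, Pvec, Pi.single_apply]

lemma Jb_eq_Jvec (a : Fin 3) : Jb a = Jvec (Pi.single a 1) := by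
  ext i <;> simp [Jb, Jvec, Pi.single_apply]

lemma adT_Pvec (t x : V3) : adT t (Pvec x) = Pvec x := by
  ext c <;> simp [adT, Pvec]

lemma adL_Pvec (g : Matrix (Fin 3) (Fin 3) ℝ) (x : V3) : adL g (Pvec x) = Pvec (g *ᵥ x) := by
  ext c <;> simp [adL, Pvec]

lemma mdot_eq_dotProduct (x y : V3) : mdot x y = x ⬝ᵥ (diagonal ηm *ᵥ y) := by
  simp only [mdot, dotProduct, mulVec_diagonal]
  exact Finset.sum_congr rfl fun a _ => by ring

lemma mdot_mulVec_of_preserves {g : Matrix (Fin 3) (Fin 3) ℝ}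
    (hg : g.transpose * diagonal ηm * g = diagonal ηm) (x y : V3) :
    mdot (g *ᵥ x) (g *ᵥ y) = mdot x y := by
  rw [mdot_eq_dotProduct, mdot_eq_dotProduct, ← vecMul_transpose, ← dotProduct_mulVec,
    mulVec_mulVec, mulVec_mulVec, hg]

lemma exists_eq_single_of_Pvec_mem_span {a : Fin 3} {x : V3}
    (hx : Pvec x ∈ Submodule.span ℝ ({Pb a, Jb a} : Set iso21)) : ∃ c : ℝ, x = Pi.single a c := by
  obtain ⟨c, d, hcd⟩ := Submodule.mem_span_pair.mp hx
  refine ⟨c, ?_⟩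
  have hsnd := congrArg Prod.snd hcd
  simp only [Pb_eq_Pvec, Jb_eq_Jvec, Pvec, Jvec, Prod.snd_add, Prod.smul_snd, smul_zero,
    add_zero] at hsnd
  rw [← hsnd, ← Pi.single_smul, smul_eq_mul, mul_one]

lemma mdot_single_single (a : Fin 3) (c : ℝ) :
    mdot (Pi.single a c) (Pi.single a c) = ηm a * c ^ 2 := by
  simp [mdot, Pi.single_apply, sq, mul_assoc]

/-- no element (g,t) of ISO(2,1) = SO⁺(2,1) ⋉ ℝ³ has an adjoint action
mapping the Cartan subalgebra span{P₀,J₀} onto span{P₁,J₁}. -/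
theorem stmt4 :
    ¬ ∃ g ∈ SOplus, ∃ t : V3,
      (fun x => adL g (adT t x)) ''
          ((Submodule.span ℝ ({Pb 0, Jb 0} : Set iso21) : Submodule ℝ iso21) : Set iso21)
        = ((Submodule.span ℝ ({Pb 1, Jb 1} : Set iso21) : Submodule ℝ iso21) : Set iso21) := by
  rintro ⟨g, ⟨hg, -, -⟩, t, himg⟩
  have hmem : Pvec (g *ᵥ Pi.single 0 1) ∈ Submodule.span ℝ ({Pb 1, Jb 1} : Set iso21) := by
    rw [← SetLike.mem_coe, ← himg, ← adL_Pvec, ← adT_Pvec t, ← Pb_eq_Pvec]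
    exact Set.mem_image_of_mem _ (Submodule.subset_span (Set.mem_insert _ _))
  obtain ⟨c, hc⟩ := exists_eq_single_of_Pvec_mem_span hmem
  have hnorm := mdot_mulVec_of_preserves hg (Pi.single 0 1) (Pi.single 0 1)
  rw [hc, mdot_single_single, mdot_single_single] at hnorm
  norm_num [ηm] at hnorm
  nlinarith [sq_nonneg c]
end
end

section
/- Let r: (-π/2, π/2) × ℝ → iso(2,1) ⊗ iso(2,1) be given by r_a(ψ,α) = ½(P_a⊗J^a + J^a⊗P_a) + ½ tan(ψ/2)(P_1∧J_2 - P_2∧J_1) + (α/(4cos²(ψ/2))) P_1∧P_2, where X∧Y := X⊗Y - Y⊗X. Then r_a is a classical dynamical r-matrix for the Cartan subalgebra h_a = span{J_0, P_0}: it is h_a-invariant and satisfies the classical dynamical Yang-Baxter equation [[r,r]] = x_1^{(1)}∂_ψ r_{23} - x_1^{(2)}∂_ψ r_{13} + x_1^{(3)}∂_ψ r_{12} + x_2^{(1)}∂_α r_{23} - x_2^{(2)}∂_α r_{13} + x_2^{(3)}∂_α r_{12} with x_1 = P_0, x_2 = J_0. -/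
open Real BigOperators Finset

noncomputable section

/-!
Put `t = tan (ψ/2)` and `u = α / (4 cos² (ψ/2))`, so that `r_a(ψ,α) = rPoly t u` with
`rPoly t u = r_S + (t/2) (P₁∧J₂ - P₂∧J₁) + u P₁∧P₂`. Since `∂_ψ t = (1 + t²)/2`, `∂_ψ u = t u`
and `∂_α u = (1 + t²)/4`, both sides of the CDYBE are polynomial in `(t, u)`, and the equation
becomes an identity between 3-tensors with polynomial coefficients, checked on the `6³` basis
triples. The vectors annihilating a 2-tensor form a subspace, so `h_a`-invariance only has to be
checked on `J₀` and `P₀`, where it is again a finite computation.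
-/

def wedgePJ : TT2 := fun μ ν => wedgeT (Pb 1) (Jb 2) μ ν - wedgeT (Pb 2) (Jb 1) μ ν

def wedgePP : TT2 := wedgeT (Pb 1) (Pb 2)

def rPoly (t u : ℝ) : TT2 := fun μ ν => rSym μ ν + 1/2 * t * wedgePJ μ ν + u * wedgePP μ ν

theorem ηm_apply (i : Fin 3) : ηm i = if i = 0 then 1 else -1 := by
  fin_cases i <;> simp [ηm]

theorem eps_apply (i j k : Fin 3) : eps i j k =
    (if i = 0 ∧ j = 1 ∧ k = 2 then 1 else 0) + (if i = 1 ∧ j = 2 ∧ k = 0 then 1 else 0)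
    + (if i = 2 ∧ j = 0 ∧ k = 1 then 1 else 0) - (if i = 0 ∧ j = 2 ∧ k = 1 then 1 else 0)
    - (if i = 2 ∧ j = 1 ∧ k = 0 then 1 else 0) - (if i = 1 ∧ j = 0 ∧ k = 2 then 1 else 0) := by
  fin_cases i <;> fin_cases j <;> fin_cases k <;> simp [eps, Prod.ext_iff]

theorem coeff_Jb (a : Fin 3) (p : Bool) (i : Fin 3) :
    coeff (Jb a) (p, i) = if p = false ∧ i = a then 1 else 0 := by
  cases p <;> simp [coeff, Jb, Jvec]

theorem coeff_Pb (a : Fin 3) (p : Bool) (i : Fin 3) :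
    coeff (Pb a) (p, i) = if p = true ∧ i = a then 1 else 0 := by
  cases p <;> simp [coeff, Pb, Pvec]

theorem coeff_add (x y : iso21) (p : Bas) : coeff (x + y) p = coeff x p + coeff y p := by
  unfold coeff; split_ifs <;> rfl

theorem coeff_smul (c : ℝ) (x : iso21) (p : Bas) : coeff (c • x) p = c * coeff x p := by
  unfold coeff; split_ifs <;> rfl

theorem Cstr_apply (p q s : Bool) (i j k : Fin 3) :
    Cstr (p, i) (q, j) (s, k) =
      if s = (p || q) ∧ ¬(p = true ∧ q = true) then ηm k * eps i j k else 0 := by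
  cases p <;> cases q <;> cases s <;>
    simp [Cstr, basis, br, coeff, Jb, Pb, Jvec, Pvec]

theorem rPoly_apply (t u : ℝ) (p q : Bool) (i j : Fin 3) :
    rPoly t u (p, i) (q, j) =
      (if i = j ∧ p ≠ q then 1/2 * ηm i else 0)
      + 1/2 * t * ((if p = true ∧ q = false ∧ i = 1 ∧ j = 2 then 1 else 0)
                - (if p = false ∧ q = true ∧ i = 2 ∧ j = 1 then 1 else 0)
                - (if p = true ∧ q = false ∧ i = 2 ∧ j = 1 then 1 else 0)
                + (if p = false ∧ q = true ∧ i = 1 ∧ j = 2 then 1 else 0))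
      + u * ((if p = true ∧ q = true ∧ i = 1 ∧ j = 2 then 1 else 0)
          - (if p = true ∧ q = true ∧ i = 2 ∧ j = 1 then 1 else 0)) := by
  cases p <;> cases q <;> fin_cases i <;> fin_cases j <;>
    norm_num [rPoly, rSym, wedgePJ, wedgePP, wedgeT, tens, coeff_Jb, coeff_Pb,
      Fin.sum_univ_three, ηm]

theorem br_add_left (x y z : iso21) : br (x + y) z = br x z + br y z := by
  ext c <;> simp only [br, Prod.fst_add, Prod.snd_add, Pi.add_apply, ← Finset.sum_add_distrib] <;>
    congr 1 <;> ext a <;> congr 1 <;> ext b <;> ring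

theorem br_smul_left (c : ℝ) (x z : iso21) : br (c • x) z = c • br x z := by
  ext d <;> simp only [br, Prod.smul_fst, Prod.smul_snd, Pi.smul_apply, smul_eq_mul,
    Finset.mul_sum] <;> congr 1 <;> ext a <;> congr 1 <;> ext b <;> ring

theorem act2_add_left (x y : iso21) (r : TT2) : act2 (x + y) r = act2 x r + act2 y r := by
  ext μ ν
  simp only [act2, br_add_left, coeff_add, Pi.add_apply, mul_add, Finset.sum_add_distrib]
  ring

theorem act2_smul_left (c : ℝ) (x : iso21) (r : TT2) : act2 (c • x) r = c • act2 x r := by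
  ext μ ν
  simp only [act2, br_smul_left, coeff_smul, Pi.smul_apply, smul_eq_mul, mul_add, Finset.mul_sum]
  congr 1 <;> congr 1 <;> ext a <;> ring

def isotropy (r : TT2) : Submodule ℝ iso21 where
  carrier := {x | act2 x r = 0}
  add_mem' {x y} hx hy := by simp_all [act2_add_left]
  zero_mem' := by simpa using act2_smul_left 0 0 r
  smul_mem' c x hx := by simp_all [act2_smul_left]

theorem act2_basis (b : Bas) (r : TT2) (μ ν : Bas) :
    act2 (basis b) r μ ν = (∑ a, r a ν * Cstr b a μ) + ∑ c, r μ c * Cstr b c ν := rfl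

set_option maxHeartbeats 1000000 in
theorem act2_basis_zero_rPoly (t u : ℝ) (p : Bool) : act2 (basis (p, 0)) (rPoly t u) = 0 := by
  ext ⟨q, i⟩ ⟨s, j⟩
  cases p <;> cases q <;> cases s <;>
  · simp only [act2_basis, Fintype.sum_prod_type, Fintype.sum_bool, Fin.sum_univ_three,
      Cstr_apply, rPoly_apply, eps_apply, ηm_apply, Pi.zero_apply]
    norm_num
    all_goals fin_cases i <;> fin_cases j <;> simp

theorem span_J0_P0_le_isotropy_rPoly (t u : ℝ) :
    Submodule.span ℝ {Jb 0, Pb 0} ≤ isotropy (rPoly t u) := by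
  rw [Submodule.span_le, Set.insert_subset_iff, Set.singleton_subset_iff]
  exact ⟨act2_basis_zero_rPoly t u false, act2_basis_zero_rPoly t u true⟩

def cdybeRHS (x₁ x₂ : iso21) (d₁ d₂ : TT2) : TT3 := fun μ ν lam =>
  coeff x₁ μ * d₁ ν lam - coeff x₁ ν * d₁ μ lam + coeff x₁ lam * d₁ μ ν
  + coeff x₂ μ * d₂ ν lam - coeff x₂ ν * d₂ μ lam + coeff x₂ lam * d₂ μ ν

theorem cdybeAt_iff (r : ℝ → ℝ → TT2) (x₁ x₂ : ℝ → ℝ → iso21) (ψ α : ℝ) :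
    CDYBEat r x₁ x₂ ψ α ↔ YB2 (r ψ α) (r ψ α) = cdybeRHS (x₁ ψ α) (x₂ ψ α)
      (fun μ ν => deriv (fun s => r s α μ ν) ψ) (fun μ ν => deriv (fun s => r ψ s μ ν) α) :=
  ⟨funext₃, congr_fun₃⟩

set_option maxHeartbeats 4000000 in
theorem YB2_rPoly (t u : ℝ) :
    YB2 (rPoly t u) (rPoly t u) = cdybeRHS (Pb 0) (Jb 0)
      (((1 + t ^ 2) / 4) • wedgePJ + (t * u) • wedgePP) (((1 + t ^ 2) / 4) • wedgePP) := by
  ext ⟨p, i⟩ ⟨q, j⟩ ⟨s, k⟩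
  cases p <;> cases q <;> cases s <;>
  · simp only [YB2, cdybeRHS, Fintype.sum_prod_type, Fintype.sum_bool, Fin.sum_univ_three,
      Cstr_apply, rPoly_apply, wedgePJ, wedgePP, wedgeT, tens, coeff_Jb, coeff_Pb, eps_apply,
      ηm_apply, Pi.add_apply, Pi.smul_apply, smul_eq_mul]
    norm_num
    all_goals fin_cases i <;> fin_cases j <;> fin_cases k <;> simp <;> ring

section Derivatives

variable {x : ℝ}

theorem hasDerivAt_rPoly {t u : ℝ → ℝ} {t' u' : ℝ} (ht : HasDerivAt t t' x)
    (hu : HasDerivAt u u' x) (μ ν : Bas) :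
    HasDerivAt (fun s => rPoly (t s) (u s) μ ν) (1/2 * t' * wedgePJ μ ν + u' * wedgePP μ ν) x :=
  (((ht.const_mul (1/2)).mul_const _).const_add _).add (hu.mul_const _)

theorem hasDerivAt_tan_half (hc : cos (x / 2) ≠ 0) :
    HasDerivAt (fun s => tan (s / 2)) ((1 + tan (x / 2) ^ 2) / 2) x := by
  refine ((hasDerivAt_tan hc).comp x ((hasDerivAt_id' x).div_const 2)).congr_deriv ?_
  rw [← inv_one_add_tan_sq hc]
  field_simp

theorem hasDerivAt_div_four_cos_sq_half (α : ℝ) (hc : cos (x / 2) ≠ 0) :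
    HasDerivAt (fun s => α / (4 * cos (s / 2) ^ 2))
      (tan (x / 2) * (α / (4 * cos (x / 2) ^ 2))) x := by
  have hden := (((hasDerivAt_id' x).div_const 2).cos.fun_pow 2).const_mul 4
  refine ((hasDerivAt_const x α).div hden (by simpa using hc)).congr_deriv ?_
  rw [tan_eq_sin_div_cos]
  field_simp
  ring

theorem deriv_ra_left (α : ℝ) (hc : cos (x / 2) ≠ 0) :
    (fun μ ν => deriv (fun s => ra s α μ ν) x) =
      ((1 + tan (x / 2) ^ 2) / 4) • wedgePJ
        + (tan (x / 2) * (α / (4 * cos (x / 2) ^ 2))) • wedgePP := by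
  ext μ ν
  have h : HasDerivAt (fun s => ra s α μ ν) _ x :=
    hasDerivAt_rPoly (hasDerivAt_tan_half hc) (hasDerivAt_div_four_cos_sq_half α hc) μ ν
  rw [h.deriv]
  simp only [Pi.add_apply, Pi.smul_apply, smul_eq_mul]
  ring

theorem deriv_ra_right (ψ : ℝ) (hc : cos (ψ / 2) ≠ 0) :
    (fun μ ν => deriv (fun s => ra ψ s μ ν) x) = ((1 + tan (ψ / 2) ^ 2) / 4) • wedgePP := by
  ext μ ν
  have h : HasDerivAt (fun s => ra ψ s μ ν) _ x :=
    hasDerivAt_rPoly (hasDerivAt_const x (tan (ψ / 2))) ((hasDerivAt_id x).div_const _) μ ν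
  rw [h.deriv, ← inv_inv (1 + tan (ψ / 2) ^ 2), inv_one_add_tan_sq hc]
  simp only [Pi.smul_apply, smul_eq_mul]
  field_simp
  ring

end Derivatives

/-- r_a(ψ,α) = ½(P_a⊗J^a + J^a⊗P_a) + ½tan(ψ/2)(P₁∧J₂ - P₂∧J₁)
+ (α/(4cos²(ψ/2))) P₁∧P₂ is a classical dynamical r-matrix for h_a = span{J₀,P₀}:
it is h_a-invariant and satisfies the CDYBE with x₁ = P₀, x₂ = J₀. -/
theorem stmt8 :
    ∀ ψ ∈ Set.Ioo (-(π/2)) (π/2), ∀ α : ℝ,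
      (∀ x ∈ Submodule.span ℝ ({Jb 0, Pb 0} : Set iso21), act2 x (ra ψ α) = 0) ∧
      CDYBEat ra (fun _ _ => Pb 0) (fun _ _ => Jb 0) ψ α := by
  intro ψ hψ α
  have hc : cos (ψ / 2) ≠ 0 :=
    (cos_pos_of_mem_Ioo ⟨by linarith [hψ.1, pi_pos], by linarith [hψ.2, pi_pos]⟩).ne'
  refine ⟨fun x hx => span_J0_P0_le_isotropy_rPoly _ _ hx, ?_⟩
  rw [cdybeAt_iff, deriv_ra_left α hc, deriv_ra_right ψ hc]
  exact YB2_rPoly _ _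
end
end

section
/- There exist no constant vectors q_ψ, q_α, q_θ ∈ ℝ³ with q_ψ ∧ q_α = 0 and q_ψ·q_ψ = q_α·q_α = 0, q_ψ ≠ 0, q_α ≠ 0, together with smooth maps V: ℝ → Mat(3,ℝ) and m: ℝ² → ℝ³, such that the CDYBE conditions (i), (ii) and the supplementary conditions 0 = q_ψ^a + ε^a_{bc} q_ψ^b ∂_ψ q_ψ^c + q_ψ^b V_b^a - q_ψ^a V^b_b, 0 = ε^a_{dh} q_α^d V^{bh} + ε^b_{dh} q_α^d V^{ah} + ε_{cde} q_α^c V^{de} η^{ab} - ε^b_{de} q_α^a V^{de} + q_α^a ∂_α q_θ^b - q_ψ^b ∂_ψ q_α^a, 0 = q_θ^a + ε^a_{bc} q_θ^b ∂_α q_θ^c + ε^a_{bc} q_ψ^b ∂_ψ q_θ^c - ε^a_{bc} m^b q_α^c + q_θ^d V_d^a - q_θ^a V_d^d all hold simultaneously. -/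
open Real BigOperators Finset

noncomputable section

lemma deriv_lin9 (V : ℝ → Matrix (Fin 3) (Fin 3) ℝ)
    (hV : ∀ b c : Fin 3, ContDiff ℝ (⊤ : ℕ∞) (fun ψ => V ψ b c))
    (c00 c01 c02 c10 c11 c12 c20 c21 c22 k : ℝ)
    (h : ∀ ψ : ℝ, k + (c00 * V ψ 0 0 + c01 * V ψ 0 1 + c02 * V ψ 0 2
      + c10 * V ψ 1 0 + c11 * V ψ 1 1 + c12 * V ψ 1 2
      + c20 * V ψ 2 0 + c21 * V ψ 2 1 + c22 * V ψ 2 2) = 0) :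
    c00 * deriv (fun s => V s 0 0) 0 + c01 * deriv (fun s => V s 0 1) 0
      + c02 * deriv (fun s => V s 0 2) 0 + c10 * deriv (fun s => V s 1 0) 0
      + c11 * deriv (fun s => V s 1 1) 0 + c12 * deriv (fun s => V s 1 2) 0
      + c20 * deriv (fun s => V s 2 0) 0 + c21 * deriv (fun s => V s 2 1) 0
      + c22 * deriv (fun s => V s 2 2) 0 = 0 := by
  have hd : ∀ b c : Fin 3, HasDerivAt (fun ψ => V ψ b c) (deriv (fun s => V s b c) 0) 0 :=
    fun b c => (((hV b c).differentiable (by simp)) 0).hasDerivAt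
  have H : HasDerivAt (fun ψ => c00 * V ψ 0 0 + c01 * V ψ 0 1 + c02 * V ψ 0 2
      + c10 * V ψ 1 0 + c11 * V ψ 1 1 + c12 * V ψ 1 2
      + c20 * V ψ 2 0 + c21 * V ψ 2 1 + c22 * V ψ 2 2)
      (c00 * deriv (fun s => V s 0 0) 0 + c01 * deriv (fun s => V s 0 1) 0
      + c02 * deriv (fun s => V s 0 2) 0 + c10 * deriv (fun s => V s 1 0) 0
      + c11 * deriv (fun s => V s 1 1) 0 + c12 * deriv (fun s => V s 1 2) 0
      + c20 * deriv (fun s => V s 2 0) 0 + c21 * deriv (fun s => V s 2 1) 0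
      + c22 * deriv (fun s => V s 2 2) 0) 0 :=
    ((((((((((hd 0 0).const_mul c00).add ((hd 0 1).const_mul c01)).add
      ((hd 0 2).const_mul c02)).add ((hd 1 0).const_mul c10)).add
      ((hd 1 1).const_mul c11)).add ((hd 1 2).const_mul c12)).add
      ((hd 2 0).const_mul c20)).add ((hd 2 1).const_mul c21)).add
      ((hd 2 2).const_mul c22))
  have Hf : (fun ψ => c00 * V ψ 0 0 + c01 * V ψ 0 1 + c02 * V ψ 0 2
      + c10 * V ψ 1 0 + c11 * V ψ 1 1 + c12 * V ψ 1 2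
      + c20 * V ψ 2 0 + c21 * V ψ 2 1 + c22 * V ψ 2 2) = fun _ => -k := by
    funext ψ
    have := h ψ
    linarith
  rw [Hf] at H
  exact H.unique (hasDerivAt_const 0 (-k))

set_option maxHeartbeats 4000000 in
/-- no constant lightlike parallel nonzero q_ψ, q_α (with constant q_θ)
together with smooth V, m satisfy simultaneously the CDYBE conditions (i), (ii) and
the supplementary conditions (q-relations). -/
theorem stmt13 :
    ¬ ∃ (qψ qα qθ : V3) (V : ℝ → Matrix (Fin 3) (Fin 3) ℝ) (m : ℝ → ℝ → V3),
      (∀ b c : Fin 3, ContDiff ℝ (⊤ : ℕ∞) (fun ψ => V ψ b c)) ∧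
      (∀ a : Fin 3, ContDiff ℝ (⊤ : ℕ∞) (fun p : ℝ × ℝ => m p.1 p.2 a)) ∧
      crossL qψ qα = 0 ∧ mdot qψ qψ = 0 ∧ mdot qα qα = 0 ∧ qψ ≠ 0 ∧ qα ≠ 0 ∧
      (∀ ψ α : ℝ, Cond1At V m (fun _ => qψ) (fun _ => qα) ψ α) ∧
      (∀ ψ α : ℝ, Cond2At V m (fun _ => qψ) (fun _ _ => qθ) ψ α) ∧
      (∀ ψ : ℝ, ∀ a : Fin 3,
        qψ a + (∑ b, ∑ c, ηm a * eps a b c * qψ b * deriv (fun _ : ℝ => qψ c) ψ)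
        + (∑ b, qψ b * (ηm b * V ψ b a)) - qψ a * (∑ b, ηm b * V ψ b b) = 0) ∧
      (∀ ψ α : ℝ, ∀ a b : Fin 3,
        (∑ d, ∑ h, ηm a * eps a d h * qα d * V ψ b h)
        + (∑ d, ∑ h, ηm b * eps b d h * qα d * V ψ a h)
        + (∑ c, ∑ d, ∑ e, eps c d e * qα c * V ψ d e) * (if a = b then ηm a else 0)
        - (∑ d, ∑ e, ηm b * eps b d e * V ψ d e) * qα a
        + qα a * deriv (fun _ : ℝ => qθ b) α
        - qψ b * deriv (fun _ : ℝ => qα a) ψ = 0) ∧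
      (∀ ψ α : ℝ, ∀ a : Fin 3,
        qθ a + (∑ b, ∑ c, ηm a * eps a b c * qθ b * deriv (fun _ : ℝ => qθ c) α)
        + (∑ b, ∑ c, ηm a * eps a b c * qψ b * deriv (fun _ : ℝ => qθ c) ψ)
        - (∑ b, ∑ c, ηm a * eps a b c * m ψ α b * qα c)
        + (∑ d, qθ d * (ηm d * V ψ d a)) - qθ a * (∑ d, ηm d * V ψ d d) = 0) := by
  rintro ⟨qψ, qα, qθ, V, m, hVs, hms, hcross, hnq, hna, hqne, hane, hC1, hC2, hsupA, hsupB, hsupC⟩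
  have hlight : qψ 0 ^ 2 - qψ 1 ^ 2 - qψ 2 ^ 2 = 0 := by
    have h := hnq
    simp [mdot, Fin.sum_univ_three, ηm] at h
    linear_combination h
  have hlta : qα 0 ^ 2 - qα 1 ^ 2 - qα 2 ^ 2 = 0 := by
    have h := hna
    simp [mdot, Fin.sum_univ_three, ηm] at h
    linear_combination h
  have hq0 : qψ 0 ≠ 0 := by
    intro h0
    apply hqne
    have h1 : qψ 1 = 0 := by
      have h : qψ 1 ^ 2 = 0 := by nlinarith [sq_nonneg (qψ 1), sq_nonneg (qψ 2)]
      exact pow_eq_zero_iff (by norm_num) |>.mp h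
    have h2 : qψ 2 = 0 := by
      have h : qψ 2 ^ 2 = 0 := by nlinarith [sq_nonneg (qψ 1), sq_nonneg (qψ 2)]
      exact pow_eq_zero_iff (by norm_num) |>.mp h
    funext i
    fin_cases i <;> simp [h0, h1, h2]
  have ha0 : qα 0 ≠ 0 := by
    intro h0
    apply hane
    have h1 : qα 1 = 0 := by
      have h : qα 1 ^ 2 = 0 := by nlinarith [sq_nonneg (qα 1), sq_nonneg (qα 2)]
      exact pow_eq_zero_iff (by norm_num) |>.mp h
    have h2 : qα 2 = 0 := by
      have h : qα 2 ^ 2 = 0 := by nlinarith [sq_nonneg (qα 1), sq_nonneg (qα 2)]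
      exact pow_eq_zero_iff (by norm_num) |>.mp h
    funext i
    fin_cases i <;> simp [h0, h1, h2]
  have hc1 := congrFun hcross 1
  have hc2 := congrFun hcross 2
  simp [crossL, Fin.sum_univ_three, ηm, eps] at hc1 hc2
  obtain ⟨LL, hL0, hL1, hL2⟩ : ∃ L : ℝ, qα 0 = L * qψ 0 ∧ qα 1 = L * qψ 1 ∧ qα 2 = L * qψ 2 := by
    refine ⟨qα 0 / qψ 0, by field_simp, ?_, ?_⟩
    · rw [div_mul_eq_mul_div, eq_div_iff hq0]
      linear_combination - hc2
    · rw [div_mul_eq_mul_div, eq_div_iff hq0]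
      linear_combination hc1
  have hLL : LL ≠ 0 := by
    intro h
    apply hane
    funext i
    fin_cases i <;> simp [hL0, hL1, hL2, h]
  have hA0 : ∀ ψ : ℝ, ((-1 : ℝ) * (qψ 2) * (V ψ 2 0) + (-1 : ℝ) * (qψ 1) * (V ψ 1 0) + (1 : ℝ) * (qψ 0) + (1 : ℝ) * (qψ 0) * (V ψ 1 1) + (1 : ℝ) * (qψ 0) * (V ψ 2 2)) = 0 := by
    intro ψ
    have h := hsupA ψ 0
    simp [Fin.sum_univ_three, ηm, eps, deriv_const] at h
    linear_combination h
  have hA1 : ∀ ψ : ℝ, ((-1 : ℝ) * (qψ 2) * (V ψ 2 1) + (1 : ℝ) * (qψ 1) + (-1 : ℝ) * (qψ 1) * (V ψ 0 0) + (1 : ℝ) * (qψ 1) * (V ψ 2 2) + (1 : ℝ) * (qψ 0) * (V ψ 0 1)) = 0 := by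
    intro ψ
    have h := hsupA ψ 1
    simp [Fin.sum_univ_three, ηm, eps, deriv_const] at h
    linear_combination h
  have hA2 : ∀ ψ : ℝ, ((1 : ℝ) * (qψ 2) + (-1 : ℝ) * (qψ 2) * (V ψ 0 0) + (1 : ℝ) * (qψ 2) * (V ψ 1 1) + (-1 : ℝ) * (qψ 1) * (V ψ 1 2) + (1 : ℝ) * (qψ 0) * (V ψ 0 2)) = 0 := by
    intro ψ
    have h := hsupA ψ 2
    simp [Fin.sum_univ_three, ηm, eps, deriv_const] at h
    linear_combination h
  have hB00 : ∀ ψ : ℝ, ((-1 : ℝ) * (qα 2) * (V ψ 0 1) + (-1 : ℝ) * (qα 2) * (V ψ 1 0) + (1 : ℝ) * (qα 1) * (V ψ 0 2) + (1 : ℝ) * (qα 1) * (V ψ 2 0)) = 0 := by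
    intro ψ
    have h := hsupB ψ 0 0 0
    simp [Fin.sum_univ_three, ηm, eps, deriv_const] at h
    linear_combination h
  have hB01 : ∀ ψ : ℝ, ((-1 : ℝ) * (qα 2) * (V ψ 0 0) + (-1 : ℝ) * (qα 2) * (V ψ 1 1) + (1 : ℝ) * (qα 1) * (V ψ 1 2) + (1 : ℝ) * (qα 0) * (V ψ 2 0)) = 0 := by
    intro ψ
    have h := hsupB ψ 0 0 1
    simp [Fin.sum_univ_three, ηm, eps, deriv_const] at h
    linear_combination h
  have hB02 : ∀ ψ : ℝ, ((-1 : ℝ) * (qα 2) * (V ψ 2 1) + (1 : ℝ) * (qα 1) * (V ψ 0 0) + (1 : ℝ) * (qα 1) * (V ψ 2 2) + (-1 : ℝ) * (qα 0) * (V ψ 1 0)) = 0 := by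
    intro ψ
    have h := hsupB ψ 0 0 2
    simp [Fin.sum_univ_three, ηm, eps, deriv_const] at h
    linear_combination h
  have hB10 : ∀ ψ : ℝ, ((-1 : ℝ) * (qα 2) * (V ψ 0 0) + (-1 : ℝ) * (qα 2) * (V ψ 1 1) + (1 : ℝ) * (qα 1) * (V ψ 2 1) + (1 : ℝ) * (qα 0) * (V ψ 0 2)) = 0 := by
    intro ψ
    have h := hsupB ψ 0 1 0
    simp [Fin.sum_univ_three, ηm, eps, deriv_const] at h
    linear_combination h
  have hB11 : ∀ ψ : ℝ, ((-1 : ℝ) * (qα 2) * (V ψ 0 1) + (-1 : ℝ) * (qα 2) * (V ψ 1 0) + (1 : ℝ) * (qα 0) * (V ψ 1 2) + (1 : ℝ) * (qα 0) * (V ψ 2 1)) = 0 := by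
    intro ψ
    have h := hsupB ψ 0 1 1
    simp [Fin.sum_univ_three, ηm, eps, deriv_const] at h
    linear_combination h
  have hB12 : ∀ ψ : ℝ, ((-1 : ℝ) * (qα 2) * (V ψ 2 0) + (1 : ℝ) * (qα 1) * (V ψ 0 1) + (-1 : ℝ) * (qα 0) * (V ψ 1 1) + (1 : ℝ) * (qα 0) * (V ψ 2 2)) = 0 := by
    intro ψ
    have h := hsupB ψ 0 1 2
    simp [Fin.sum_univ_three, ηm, eps, deriv_const] at h
    linear_combination h
  have hB20 : ∀ ψ : ℝ, ((-1 : ℝ) * (qα 2) * (V ψ 1 2) + (1 : ℝ) * (qα 1) * (V ψ 0 0) + (1 : ℝ) * (qα 1) * (V ψ 2 2) + (-1 : ℝ) * (qα 0) * (V ψ 0 1)) = 0 := by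
    intro ψ
    have h := hsupB ψ 0 2 0
    simp [Fin.sum_univ_three, ηm, eps, deriv_const] at h
    linear_combination h
  have pA0 : ∀ ψ : ℝ, (qψ 0) + ((0 : ℝ) * V ψ 0 0 + (0 : ℝ) * V ψ 0 1 + (0 : ℝ) * V ψ 0 2 + ((-1 : ℝ) * (qψ 1)) * V ψ 1 0 + ((1 : ℝ) * (qψ 0)) * V ψ 1 1 + (0 : ℝ) * V ψ 1 2 + ((-1 : ℝ) * (qψ 2)) * V ψ 2 0 + (0 : ℝ) * V ψ 2 1 + ((1 : ℝ) * (qψ 0)) * V ψ 2 2) = 0 := by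
    intro ψ
    linear_combination hA0 ψ
  have hAp0 : ((-1 : ℝ) * (qψ 2) * (deriv (fun s => V s 2 0) 0) + (-1 : ℝ) * (qψ 1) * (deriv (fun s => V s 1 0) 0) + (1 : ℝ) * (qψ 0) * (deriv (fun s => V s 1 1) 0) + (1 : ℝ) * (qψ 0) * (deriv (fun s => V s 2 2) 0)) = 0 := by
    linear_combination deriv_lin9 V hVs _ _ _ _ _ _ _ _ _ _ pA0
  have pA1 : ∀ ψ : ℝ, (qψ 1) + (((-1 : ℝ) * (qψ 1)) * V ψ 0 0 + ((1 : ℝ) * (qψ 0)) * V ψ 0 1 + (0 : ℝ) * V ψ 0 2 + (0 : ℝ) * V ψ 1 0 + (0 : ℝ) * V ψ 1 1 + (0 : ℝ) * V ψ 1 2 + (0 : ℝ) * V ψ 2 0 + ((-1 : ℝ) * (qψ 2)) * V ψ 2 1 + ((1 : ℝ) * (qψ 1)) * V ψ 2 2) = 0 := by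
    intro ψ
    linear_combination hA1 ψ
  have hAp1 : ((-1 : ℝ) * (qψ 2) * (deriv (fun s => V s 2 1) 0) + (-1 : ℝ) * (qψ 1) * (deriv (fun s => V s 0 0) 0) + (1 : ℝ) * (qψ 1) * (deriv (fun s => V s 2 2) 0) + (1 : ℝ) * (qψ 0) * (deriv (fun s => V s 0 1) 0)) = 0 := by
    linear_combination deriv_lin9 V hVs _ _ _ _ _ _ _ _ _ _ pA1
  have pA2 : ∀ ψ : ℝ, (qψ 2) + (((-1 : ℝ) * (qψ 2)) * V ψ 0 0 + (0 : ℝ) * V ψ 0 1 + ((1 : ℝ) * (qψ 0)) * V ψ 0 2 + (0 : ℝ) * V ψ 1 0 + ((1 : ℝ) * (qψ 2)) * V ψ 1 1 + ((-1 : ℝ) * (qψ 1)) * V ψ 1 2 + (0 : ℝ) * V ψ 2 0 + (0 : ℝ) * V ψ 2 1 + (0 : ℝ) * V ψ 2 2) = 0 := by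
    intro ψ
    linear_combination hA2 ψ
  have hAp2 : ((-1 : ℝ) * (qψ 2) * (deriv (fun s => V s 0 0) 0) + (1 : ℝ) * (qψ 2) * (deriv (fun s => V s 1 1) 0) + (-1 : ℝ) * (qψ 1) * (deriv (fun s => V s 1 2) 0) + (1 : ℝ) * (qψ 0) * (deriv (fun s => V s 0 2) 0)) = 0 := by
    linear_combination deriv_lin9 V hVs _ _ _ _ _ _ _ _ _ _ pA2
  have pB00 : ∀ ψ : ℝ, (0 : ℝ) + ((0 : ℝ) * V ψ 0 0 + ((-1 : ℝ) * (qα 2)) * V ψ 0 1 + ((1 : ℝ) * (qα 1)) * V ψ 0 2 + ((-1 : ℝ) * (qα 2)) * V ψ 1 0 + (0 : ℝ) * V ψ 1 1 + (0 : ℝ) * V ψ 1 2 + ((1 : ℝ) * (qα 1)) * V ψ 2 0 + (0 : ℝ) * V ψ 2 1 + (0 : ℝ) * V ψ 2 2) = 0 := by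
    intro ψ
    linear_combination hB00 ψ
  have hBp00 : ((-1 : ℝ) * (qα 2) * (deriv (fun s => V s 0 1) 0) + (-1 : ℝ) * (qα 2) * (deriv (fun s => V s 1 0) 0) + (1 : ℝ) * (qα 1) * (deriv (fun s => V s 0 2) 0) + (1 : ℝ) * (qα 1) * (deriv (fun s => V s 2 0) 0)) = 0 := by
    linear_combination deriv_lin9 V hVs _ _ _ _ _ _ _ _ _ _ pB00
  have pB11 : ∀ ψ : ℝ, (0 : ℝ) + ((0 : ℝ) * V ψ 0 0 + ((-1 : ℝ) * (qα 2)) * V ψ 0 1 + (0 : ℝ) * V ψ 0 2 + ((-1 : ℝ) * (qα 2)) * V ψ 1 0 + (0 : ℝ) * V ψ 1 1 + ((1 : ℝ) * (qα 0)) * V ψ 1 2 + (0 : ℝ) * V ψ 2 0 + ((1 : ℝ) * (qα 0)) * V ψ 2 1 + (0 : ℝ) * V ψ 2 2) = 0 := by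
    intro ψ
    linear_combination hB11 ψ
  have hBp11 : ((-1 : ℝ) * (qα 2) * (deriv (fun s => V s 0 1) 0) + (-1 : ℝ) * (qα 2) * (deriv (fun s => V s 1 0) 0) + (1 : ℝ) * (qα 0) * (deriv (fun s => V s 1 2) 0) + (1 : ℝ) * (qα 0) * (deriv (fun s => V s 2 1) 0)) = 0 := by
    linear_combination deriv_lin9 V hVs _ _ _ _ _ _ _ _ _ _ pB11
  have pB12 : ∀ ψ : ℝ, (0 : ℝ) + ((0 : ℝ) * V ψ 0 0 + ((1 : ℝ) * (qα 1)) * V ψ 0 1 + (0 : ℝ) * V ψ 0 2 + (0 : ℝ) * V ψ 1 0 + ((-1 : ℝ) * (qα 0)) * V ψ 1 1 + (0 : ℝ) * V ψ 1 2 + ((-1 : ℝ) * (qα 2)) * V ψ 2 0 + (0 : ℝ) * V ψ 2 1 + ((1 : ℝ) * (qα 0)) * V ψ 2 2) = 0 := by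
    intro ψ
    linear_combination hB12 ψ
  have hBp12 : ((-1 : ℝ) * (qα 2) * (deriv (fun s => V s 2 0) 0) + (1 : ℝ) * (qα 1) * (deriv (fun s => V s 0 1) 0) + (-1 : ℝ) * (qα 0) * (deriv (fun s => V s 1 1) 0) + (1 : ℝ) * (qα 0) * (deriv (fun s => V s 2 2) 0)) = 0 := by
    linear_combination deriv_lin9 V hVs _ _ _ _ _ _ _ _ _ _ pB12
  have pB20 : ∀ ψ : ℝ, (0 : ℝ) + (((1 : ℝ) * (qα 1)) * V ψ 0 0 + ((-1 : ℝ) * (qα 0)) * V ψ 0 1 + (0 : ℝ) * V ψ 0 2 + (0 : ℝ) * V ψ 1 0 + (0 : ℝ) * V ψ 1 1 + ((-1 : ℝ) * (qα 2)) * V ψ 1 2 + (0 : ℝ) * V ψ 2 0 + (0 : ℝ) * V ψ 2 1 + ((1 : ℝ) * (qα 1)) * V ψ 2 2) = 0 := by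
    intro ψ
    linear_combination hB20 ψ
  have hBp20 : ((-1 : ℝ) * (qα 2) * (deriv (fun s => V s 1 2) 0) + (1 : ℝ) * (qα 1) * (deriv (fun s => V s 0 0) 0) + (1 : ℝ) * (qα 1) * (deriv (fun s => V s 2 2) 0) + (-1 : ℝ) * (qα 0) * (deriv (fun s => V s 0 1) 0)) = 0 := by
    linear_combination deriv_lin9 V hVs _ _ _ _ _ _ _ _ _ _ pB20
  have hC012 : ((-1 : ℝ) * (V 0 0 0) + (-1 : ℝ) * (V 0 0 0) * (V 0 1 1) + (-1 : ℝ) * (V 0 0 0) * (V 0 2 2) + (1 : ℝ) * (V 0 1 0) * (V 0 1 0) + (-1 : ℝ) * (V 0 1 1) * (V 0 2 2) + (1 : ℝ) * (V 0 1 2) * (V 0 2 1) + (1 : ℝ) * (V 0 2 0) * (V 0 2 0) + (1 : ℝ) * (qα 0) * (deriv (fun s => m 0 s 0) 0) + (1 : ℝ) * (qψ 2) * (deriv (fun s => V s 1 0) 0) + (-1 : ℝ) * (qψ 1) * (deriv (fun s => V s 2 0) 0)) = 0 := by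
    have h := hC1 0 0 0 1 2
    simp [Fin.sum_univ_three, ηm, eps] at h
    linear_combination h
  have hC102 : ((1 : ℝ) * (V 0 0 0) * (V 0 1 1) + (-1 : ℝ) * (V 0 0 0) * (V 0 2 2) + (-1 : ℝ) * (V 0 0 1) * (V 0 0 1) + (1 : ℝ) * (V 0 0 2) * (V 0 2 0) + (-1 : ℝ) * (V 0 1 1) + (-1 : ℝ) * (V 0 1 1) * (V 0 2 2) + (1 : ℝ) * (V 0 2 1) * (V 0 2 1) + (1 : ℝ) * (qα 1) * (deriv (fun s => m 0 s 1) 0) + (1 : ℝ) * (qψ 2) * (deriv (fun s => V s 0 1) 0) + (-1 : ℝ) * (qψ 0) * (deriv (fun s => V s 2 1) 0)) = 0 := by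
    have h := hC1 0 0 1 0 2
    simp [Fin.sum_univ_three, ηm, eps] at h
    linear_combination h
  have hC112 : ((-1 : ℝ) * (V 0 0 1) + (-1 : ℝ) * (V 0 0 1) * (V 0 1 1) + (-1 : ℝ) * (V 0 0 1) * (V 0 2 2) + (1 : ℝ) * (V 0 1 0) * (V 0 1 1) + (-1 : ℝ) * (V 0 1 0) * (V 0 2 2) + (1 : ℝ) * (V 0 1 2) * (V 0 2 0) + (1 : ℝ) * (V 0 2 0) * (V 0 2 1) + (1 : ℝ) * (qα 1) * (deriv (fun s => m 0 s 0) 0) + (1 : ℝ) * (qψ 2) * (deriv (fun s => V s 1 1) 0) + (-1 : ℝ) * (qψ 1) * (deriv (fun s => V s 2 1) 0)) = 0 := by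
    have h := hC1 0 0 1 1 2
    simp [Fin.sum_univ_three, ηm, eps] at h
    linear_combination h
  have hC201 : ((1 : ℝ) * (V 0 0 0) * (V 0 1 1) + (-1 : ℝ) * (V 0 0 0) * (V 0 2 2) + (-1 : ℝ) * (V 0 0 1) * (V 0 1 0) + (1 : ℝ) * (V 0 0 2) * (V 0 0 2) + (1 : ℝ) * (V 0 1 1) * (V 0 2 2) + (-1 : ℝ) * (V 0 1 2) * (V 0 1 2) + (1 : ℝ) * (V 0 2 2) + (-1 : ℝ) * (qα 2) * (deriv (fun s => m 0 s 2) 0) + (1 : ℝ) * (qψ 1) * (deriv (fun s => V s 0 2) 0) + (-1 : ℝ) * (qψ 0) * (deriv (fun s => V s 1 2) 0)) = 0 := by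
    have h := hC1 0 0 2 0 1
    simp [Fin.sum_univ_three, ηm, eps] at h
    linear_combination h
  by_cases hz1 : qψ 1 = 0
  · have hq2 : qψ 2 ≠ 0 := by
      intro h2
      apply hq0
      have h : qψ 0 ^ 2 = 0 := by linear_combination hlight + qψ 1 * hz1 + qψ 2 * h2
      exact pow_eq_zero_iff (by norm_num) |>.mp h
    have hz : qψ 1 = 0 := hz1
    have key : ((1/4 : ℝ) * (qψ 2) ^ 2 * (LL)) = 0 := by
      linear_combination ((1/2 : ℝ) * (qψ 0) * (LL)) * (hA0 0) +
      ((1 : ℝ) * (qψ 0) * (LL)) * (V 0 1 1) * (hA0 0) +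
      ((1 : ℝ) * (qψ 2) * (LL)) * (V 0 2 0) * (hA0 0) +
      ((1 : ℝ) * (qψ 0) * (LL)) * (V 0 0 1) * (hA1 0) +
      ((1 : ℝ) * (qψ 2) * (LL)) * (V 0 2 1) * (hA1 0) +
      ((-1/4 : ℝ) * (qψ 2) * (LL)) * (hA2 0) +
      ((-1/2 : ℝ) * (qψ 0) * (LL)) * (V 0 2 0) * (hA2 0) +
      ((-1/2 : ℝ) * (qψ 2) * (LL)) * (V 0 2 2) * (hA2 0) +
      ((-1 : ℝ) * (qψ 0) * (qψ 2) * (LL)) * hAp1 +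
      ((1 : ℝ) * (qψ 2)) * (V 0 1 1) * (hB01 0) +
      ((1 : ℝ) * (qψ 0)) * (V 0 2 0) * (hB01 0) +
      ((-1 : ℝ) * (qψ 2)) * (V 0 2 2) * (hB01 0) +
      ((1/4 : ℝ) * (qψ 2)) * (hB10 0) +
      ((-1/2 : ℝ) * (qψ 0)) * (V 0 2 0) * (hB10 0) +
      ((1/2 : ℝ) * (qψ 2)) * (V 0 2 2) * (hB10 0) +
      ((1 : ℝ) * (qψ 2) ^ 2 * (LL)) * hC102 +
      (- ((1/4 : ℝ) * (qψ 2) * (V 0 0 2) + (1/2 : ℝ) * (qψ 2) * (V 0 0 2) * (V 0 2 2) + (1 : ℝ) * (qψ 2) * (V 0 1 1) * (V 0 2 0) + (-1 : ℝ) * (qψ 2) * (V 0 2 0) * (V 0 2 2) + (-1/2 : ℝ) * (qψ 0) * (V 0 0 2) * (V 0 2 0) + (1 : ℝ) * (qψ 0) * (V 0 2 0) * (V 0 2 0))) * hL0 +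
      (- ((1 : ℝ) * (qψ 2) * (V 0 1 1) * (V 0 1 2) + (-1 : ℝ) * (qψ 2) * (V 0 1 2) * (V 0 2 2) + (1/4 : ℝ) * (qψ 2) * (V 0 2 1) + (1/2 : ℝ) * (qψ 2) * (V 0 2 1) * (V 0 2 2) + (1 : ℝ) * (qψ 2) ^ 2 * (LL) * (deriv (fun s => m 0 s 1) 0) + (1 : ℝ) * (qψ 0) * (V 0 1 2) * (V 0 2 0) + (-1/2 : ℝ) * (qψ 0) * (V 0 2 0) * (V 0 2 1))) * hL1 +
      (- ((-1/4 : ℝ) * (qψ 2) * (V 0 0 0) + (-1 : ℝ) * (qψ 2) * (V 0 0 0) * (V 0 1 1) + (1/2 : ℝ) * (qψ 2) * (V 0 0 0) * (V 0 2 2) + (-1/4 : ℝ) * (qψ 2) * (V 0 1 1) + (-1 : ℝ) * (qψ 2) * (V 0 1 1) * (V 0 1 1) + (1/2 : ℝ) * (qψ 2) * (V 0 1 1) * (V 0 2 2) + (-1/2 : ℝ) * (qψ 0) * (V 0 0 0) * (V 0 2 0) + (-1/2 : ℝ) * (qψ 0) * (V 0 1 1) * (V 0 2 0))) * hL2 +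
      (- ((1/2 : ℝ) * (LL) + (1 : ℝ) * (LL) * (V 0 0 1) * (V 0 0 1) + (-1 : ℝ) * (LL) * (V 0 0 2) * (V 0 2 0) + (3/2 : ℝ) * (LL) * (V 0 1 1) + (1 : ℝ) * (LL) * (V 0 1 1) * (V 0 1 1) + (1 : ℝ) * (LL) * (V 0 1 1) * (V 0 2 2) + (1 : ℝ) * (LL) * (V 0 2 0) * (V 0 2 0) + (1/2 : ℝ) * (LL) * (V 0 2 2) + (-1 : ℝ) * (qψ 2) * (LL) * (deriv (fun s => V s 0 1) 0))) * hlight +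
      (- ((-1 : ℝ) * (qψ 2) * (LL) * (V 0 0 0) * (V 0 2 1) + (-1 : ℝ) * (qψ 2) * (LL) * (V 0 1 0) * (V 0 2 0) + (1 : ℝ) * (qψ 2) * (LL) * (V 0 1 1) * (V 0 1 2) + (1/4 : ℝ) * (qψ 2) * (LL) * (V 0 1 2) + (-1/2 : ℝ) * (qψ 2) * (LL) * (V 0 1 2) * (V 0 2 2) + (5/4 : ℝ) * (qψ 2) * (LL) * (V 0 2 1) + (3/2 : ℝ) * (qψ 2) * (LL) * (V 0 2 1) * (V 0 2 2) + (1 : ℝ) * (qψ 2) ^ 2 * (LL) ^ 2 * (deriv (fun s => m 0 s 1) 0) + (1/2 : ℝ) * (qψ 1) * (LL) + (1 : ℝ) * (qψ 1) * (LL) * (V 0 0 1) * (V 0 0 1) + (-1 : ℝ) * (qψ 1) * (LL) * (V 0 0 2) * (V 0 2 0) + (3/2 : ℝ) * (qψ 1) * (LL) * (V 0 1 1) + (1 : ℝ) * (qψ 1) * (LL) * (V 0 1 1) * (V 0 1 1) + (1 : ℝ) * (qψ 1) * (LL) * (V 0 1 1) * (V 0 2 2) + (1 : ℝ) * (qψ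 1) * (LL) * (V 0 2 0) * (V 0 2 0) + (1/2 : ℝ) * (qψ 1) * (LL) * (V 0 2 2) + (-1 : ℝ) * (qψ 1) * (qψ 2) * (LL) * (deriv (fun s => V s 0 1) 0) + (-1 : ℝ) * (qψ 0) * (LL) * (V 0 0 0) * (V 0 0 1) + (1 : ℝ) * (qψ 0) * (LL) * (V 0 0 1) + (1 : ℝ) * (qψ 0) * (LL) * (V 0 0 1) * (V 0 2 2) + (-1/2 : ℝ) * (qψ 0) * (LL) * (V 0 1 0) + (-1 : ℝ) * (qψ 0) * (LL) * (V 0 1 0) * (V 0 1 1) + (3/2 : ℝ) * (qψ 0) * (LL) * (V 0 1 2) * (V 0 2 0) + (-1/2 : ℝ) * (qψ 0) * (LL) * (V 0 2 0) * (V 0 2 1) + (1 : ℝ) * (qψ 0) * (qψ 2) * (LL) * (deriv (fun s => V s 0 0) 0) + (-1 : ℝ) * (qψ 0) * (qψ 2) * (LL) * (deriv (fun s => V s 2 2) 0))) * hz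
    have final : qψ 2 ^ 2 * LL = 0 := by linear_combination (4 : ℝ) * key
    rcases mul_eq_zero.mp final with h | h
    · exact pow_ne_zero 2 hq2 h
    · exact hLL h
  · by_cases hz2 : qψ 2 = 0
    · have hz : qψ 2 = 0 := hz2
      have key : ((-1/4 : ℝ) * (qψ 1) ^ 2 * (LL)) = 0 := by
        linear_combination ((-1/4 : ℝ) * (qψ 0) * (LL)) * (hA0 0) +
      ((-1/2 : ℝ) * (qψ 1) * (LL)) * (V 0 1 0) * (hA0 0) +
      ((1/2 : ℝ) * (qψ 0) * (LL)) * (V 0 1 1) * (hA0 0) +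
      ((-1 : ℝ) * (qψ 0) * (LL)) * (V 0 2 2) * (hA0 0) +
      ((-1 : ℝ) * (qψ 1) * (LL)) * (V 0 1 2) * (hA2 0) +
      ((1 : ℝ) * (qψ 1) * (LL)) * (V 0 2 1) * (hA2 0) +
      ((-1 : ℝ) * (qψ 0) * (qψ 1) * (LL)) * hAp2 +
      ((-1/4 : ℝ) * (qψ 1)) * (hB02 0) +
      ((1/2 : ℝ) * (qψ 0)) * (V 0 1 0) * (hB02 0) +
      ((-3/2 : ℝ) * (qψ 1)) * (V 0 1 1) * (hB02 0) +
      ((1 : ℝ) * (qψ 1)) * (V 0 2 2) * (hB02 0) +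
      ((-1 : ℝ) * (qψ 0)) * (V 0 0 2) * (hB10 0) +
      ((1 : ℝ) * (qψ 1)) * (V 0 1 2) * (hB10 0) +
      ((1/4 : ℝ) * (qψ 0)) * (hB12 0) +
      ((1/2 : ℝ) * (qψ 1)) * (V 0 1 0) * (hB12 0) +
      ((1/2 : ℝ) * (qψ 0)) * (V 0 1 1) * (hB12 0) +
      ((1/4 : ℝ) * (qψ 1)) * (hB20 0) +
      ((-1/2 : ℝ) * (qψ 0)) * (V 0 1 0) * (hB20 0) +
      ((1/2 : ℝ) * (qψ 1)) * (V 0 1 1) * (hB20 0) +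
      ((1 : ℝ) * (qψ 1) ^ 2 * (LL)) * hC201 +
      (- ((-1/4 : ℝ) * (qψ 1) * (V 0 0 1) + (-1/2 : ℝ) * (qψ 1) * (V 0 0 1) * (V 0 1 1) + (1 : ℝ) * (qψ 1) * (V 0 0 2) * (V 0 1 2) + (1/4 : ℝ) * (qψ 1) * (V 0 1 0) + (1 : ℝ) * (qψ 1) * (V 0 1 0) * (V 0 1 1) + (-1/2 : ℝ) * (qψ 1) * (V 0 1 0) * (V 0 2 2) + (1/2 : ℝ) * (qψ 0) * (V 0 0 1) * (V 0 1 0) + (-1 : ℝ) * (qψ 0) * (V 0 0 2) * (V 0 0 2) + (-1/2 : ℝ) * (qψ 0) * (V 0 1 0) * (V 0 1 0) + (-1/4 : ℝ) * (qψ 0) * (V 0 1 1) + (-1/2 : ℝ) * (qψ 0) * (V 0 1 1) * (V 0 1 1) + (1/2 : ℝ) * (qψ 0) * (V 0 1 1) * (V 0 2 2) + (1/4 : ℝ) * (qψ 0) * (V 0 2 2))) * hL0 +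
      (- ((-1 : ℝ) * (qψ 1) * (V 0 0 0) * (V 0 1 1) + (1 : ℝ) * (qψ 1) * (V 0 0 0) * (V 0 2 2) + (1/2 : ℝ) * (qψ 1) * (V 0 0 1) * (V 0 1 0) + (-1 : ℝ) * (qψ 1) * (V 0 1 1) * (V 0 2 2) + (1 : ℝ) * (qψ 1) * (V 0 1 2) * (V 0 2 1) + (1 : ℝ) * (qψ 1) * (V 0 2 2) * (V 0 2 2) + (1/4 : ℝ) * (qψ 0) * (V 0 0 1) + (1/2 : ℝ) * (qψ 0) * (V 0 0 1) * (V 0 1 1) + (-1 : ℝ) * (qψ 0) * (V 0 0 2) * (V 0 2 1))) * hL1 +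
      (- ((-1 : ℝ) * (qψ 1) * (V 0 0 0) * (V 0 1 2) + (-1/2 : ℝ) * (qψ 1) * (V 0 1 0) * (V 0 2 0) + (-3/2 : ℝ) * (qψ 1) * (V 0 1 1) * (V 0 1 2) + (3/2 : ℝ) * (qψ 1) * (V 0 1 1) * (V 0 2 1) + (-1/4 : ℝ) * (qψ 1) * (V 0 1 2) + (1/4 : ℝ) * (qψ 1) * (V 0 2 1) + (-1 : ℝ) * (qψ 1) * (V 0 2 1) * (V 0 2 2) + (-1 : ℝ) * (qψ 1) ^ 2 * (LL) * (deriv (fun s => m 0 s 2) 0) + (1 : ℝ) * (qψ 0) * (V 0 0 0) * (V 0 0 2) + (1 : ℝ) * (qψ 0) * (V 0 0 2) * (V 0 1 1) + (1/2 : ℝ) * (qψ 0) * (V 0 1 0) * (V 0 1 2) + (-1/2 : ℝ) * (qψ 0) * (V 0 1 0) * (V 0 2 1) + (-1/2 : ℝ) * (qψ 0) * (V 0 1 1) * (V 0 2 0) + (-1/4 : ℝ) * (qψ 0) * (V 0 2 0))) * hL2 +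
      (- ((-1/4 : ℝ) * (LL) + (1/2 : ℝ) * (LL) * (V 0 0 1) * (V 0 1 0) + (-1 : ℝ) * (LL) * (V 0 0 2) * (V 0 0 2) + (-1/2 : ℝ) * (LL) * (V 0 1 0) * (V 0 1 0) + (-1 : ℝ) * (LL) * (V 0 2 2) + (-1 : ℝ) * (LL) * (V 0 2 2) * (V 0 2 2) + (-1 : ℝ) * (qψ 1) * (LL) * (deriv (fun s => V s 0 2) 0))) * hlight +
      (- ((-1/4 : ℝ) * (qψ 2) * (LL) + (1/2 : ℝ) * (qψ 2) * (LL) * (V 0 0 1) * (V 0 1 0) + (-1 : ℝ) * (qψ 2) * (LL) * (V 0 0 2) * (V 0 0 2) + (-1/2 : ℝ) * (qψ 2) * (LL) * (V 0 1 0) * (V 0 1 0) + (-1 : ℝ) * (qψ 2) * (LL) * (V 0 2 2) + (-1 : ℝ) * (qψ 2) * (LL) * (V 0 2 2) * (V 0 2 2) + (-1 : ℝ) * (qψ 1) * (LL) * (V 0 0 0) * (V 0 2 1) + (-5/2 : ℝ) * (qψ 1) * (LL) * (V 0 1 1) * (V 0 1 2) + (5/2 : ℝ) * (qψ 1) * (LL)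 * (V 0 1 1) * (V 0 2 1) + (-5/4 : ℝ) * (qψ 1) * (LL) * (V 0 1 2) + (5/4 : ℝ) * (qψ 1) * (LL) * (V 0 2 1) + (-1 : ℝ) * (qψ 1) * (LL) * (V 0 2 1) * (V 0 2 2) + (-1 : ℝ) * (qψ 1) * (qψ 2) * (LL) * (deriv (fun s => V s 0 2) 0) + (-1 : ℝ) * (qψ 1) ^ 2 * (LL) ^ 2 * (deriv (fun s => m 0 s 2) 0) + (1 : ℝ) * (qψ 0) * (LL) * (V 0 0 0) * (V 0 0 2) + (1 : ℝ) * (qψ 0) * (LL) * (V 0 0 2) * (V 0 1 1) + (1/2 : ℝ) * (qψ 0) * (LL) * (V 0 1 0) * (V 0 1 2) + (-1/2 : ℝ) * (qψ 0) * (LL) * (V 0 1 0) * (V 0 2 1) + (-1 : ℝ) * (qψ 0) * (LL) * (V 0 1 1) * (V 0 2 0) + (1 : ℝ) * (qψ 0) * (LL) * (V 0 2 0) * (V 0 2 2) + (1 : ℝ) * (qψ 0) * (qψ 1) * (LL) * (deriv (fun s => V s 0 0) 0) + (-1 : ℝ) * (qψ 0) * (qψ 1) * (LL) * (deriv (fun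 s => V s 1 1) 0))) * hz
      have final : qψ 1 ^ 2 * LL = 0 := by linear_combination (-4 : ℝ) * key
      rcases mul_eq_zero.mp final with h | h
      · exact pow_ne_zero 2 hz1 h
      · exact hLL h
    · have key : ((-1/4 : ℝ) * (qψ 1) * (qψ 2) ^ 7 * (LL) + (-1/4 : ℝ) * (qψ 1) ^ 3 * (qψ 2) ^ 5 * (LL)) = 0 := by
        linear_combination ((-1/2 : ℝ) * (qψ 0) * (qψ 1) * (qψ 2) ^ 5 * (LL) + (-2 : ℝ) * (qψ 0) * (qψ 1) ^ 3 * (qψ 2) ^ 3 * (LL) + (-1 : ℝ) * (qψ 0) * (qψ 1) ^ 5 * (qψ 2) * (LL)) * (hA0 0) +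
      ((1 : ℝ) * (qψ 1) ^ 2 * (qψ 2) ^ 5 * (LL) + (2 : ℝ) * (qψ 1) ^ 4 * (qψ 2) ^ 3 * (LL) + (1 : ℝ) * (qψ 1) ^ 6 * (qψ 2) * (LL)) * (V 0 1 0) * (hA0 0) +
      ((-1 : ℝ) * (qψ 0) * (qψ 1) * (qψ 2) ^ 5 * (LL) + (-2 : ℝ) * (qψ 0) * (qψ 1) ^ 3 * (qψ 2) ^ 3 * (LL) + (-1 : ℝ) * (qψ 0) * (qψ 1) ^ 5 * (qψ 2) * (LL)) * (V 0 1 1) * (hA0 0) +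
      ((-1 : ℝ) * (qψ 1) * (qψ 2) ^ 6 * (LL) + (-3 : ℝ) * (qψ 1) ^ 3 * (qψ 2) ^ 4 * (LL) + (-2 : ℝ) * (qψ 1) ^ 5 * (qψ 2) ^ 2 * (LL)) * (V 0 2 0) * (hA0 0) +
      ((4 : ℝ) * (qψ 0) * (qψ 1) ^ 2 * (qψ 2) ^ 4 * (LL) + (3 : ℝ) * (qψ 0) * (qψ 1) ^ 4 * (qψ 2) ^ 2 * (LL)) * (V 0 2 1) * (hA0 0) +
      ((-2 : ℝ) * (qψ 0) * (qψ 1) ^ 3 * (qψ 2) ^ 3 * (LL) + (-1 : ℝ) * (qψ 0) * (qψ 1) ^ 5 * (qψ 2) * (LL)) * (V 0 2 2) * (hA0 0) +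
      ((-1 : ℝ) * (qψ 2) ^ 7 * (LL) + (1/2 : ℝ) * (qψ 1) ^ 2 * (qψ 2) ^ 5 * (LL) + (5/2 : ℝ) * (qψ 1) ^ 4 * (qψ 2) ^ 3 * (LL) + (1 : ℝ) * (qψ 1) ^ 6 * (qψ 2) * (LL)) * (hA1 0) +
      ((1 : ℝ) * (qψ 0) * (qψ 1) * (qψ 2) ^ 5 * (LL) + (-1 : ℝ) * (qψ 0) * (qψ 1) ^ 3 * (qψ 2) ^ 3 * (LL) + (-1 : ℝ) * (qψ 0) * (qψ 1) ^ 5 * (qψ 2) * (LL)) * (V 0 1 0) * (hA1 0) +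
      ((-2 : ℝ) * (qψ 2) ^ 7 * (LL) + (-1 : ℝ) * (qψ 1) ^ 2 * (qψ 2) ^ 5 * (LL) + (2 : ℝ) * (qψ 1) ^ 4 * (qψ 2) ^ 3 * (LL) + (1 : ℝ) * (qψ 1) ^ 6 * (qψ 2) * (LL)) * (V 0 1 1) * (hA1 0) +
      ((1 : ℝ) * (qψ 0) * (qψ 1) ^ 2 * (qψ 2) ^ 4 * (LL) + (2 : ℝ) * (qψ 0) * (qψ 1) ^ 4 * (qψ 2) ^ 2 * (LL)) * (V 0 2 0) * (hA1 0) +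
      ((-1 : ℝ) * (qψ 1) * (qψ 2) ^ 6 * (LL) + (-4 : ℝ) * (qψ 1) ^ 3 * (qψ 2) ^ 4 * (LL) + (-3 : ℝ) * (qψ 1) ^ 5 * (qψ 2) ^ 2 * (LL)) * (V 0 2 1) * (hA1 0) +
      ((2 : ℝ) * (qψ 1) ^ 2 * (qψ 2) ^ 5 * (LL) + (3 : ℝ) * (qψ 1) ^ 4 * (qψ 2) ^ 3 * (LL) + (1 : ℝ) * (qψ 1) ^ 6 * (qψ 2) * (LL)) * (V 0 2 2) * (hA1 0) +
      ((5/4 : ℝ) * (qψ 1) * (qψ 2) ^ 6 * (LL) + (7/4 : ℝ) * (qψ 1) ^ 3 * (qψ 2) ^ 4 * (LL) + (1/2 : ℝ) * (qψ 1) ^ 5 * (qψ 2) ^ 2 * (LL)) * (hA2 0) +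
      ((-1 : ℝ) * (qψ 0) * (qψ 1) ^ 2 * (qψ 2) ^ 4 * (LL) + (-1/2 : ℝ) * (qψ 0) * (qψ 1) ^ 4 * (qψ 2) ^ 2 * (LL)) * (V 0 1 0) * (hA2 0) +
      ((1 : ℝ) * (qψ 1) * (qψ 2) ^ 6 * (LL) + (3/2 : ℝ) * (qψ 1) ^ 3 * (qψ 2) ^ 4 * (LL) + (1/2 : ℝ) * (qψ 1) ^ 5 * (qψ 2) ^ 2 * (LL)) * (V 0 1 1) * (hA2 0) +
      ((1/2 : ℝ) * (qψ 0) * (qψ 1) * (qψ 2) ^ 5 * (LL) + (1 : ℝ) * (qψ 0) * (qψ 1) ^ 3 * (qψ 2) ^ 3 * (LL)) * (V 0 2 0) * (hA2 0) +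
      ((-1 : ℝ) * (qψ 2) ^ 7 * (LL) + (-5/2 : ℝ) * (qψ 1) ^ 2 * (qψ 2) ^ 5 * (LL) + (-3/2 : ℝ) * (qψ 1) ^ 4 * (qψ 2) ^ 3 * (LL)) * (V 0 2 1) * (hA2 0) +
      ((3/2 : ℝ) * (qψ 1) * (qψ 2) ^ 6 * (LL) + (2 : ℝ) * (qψ 1) ^ 3 * (qψ 2) ^ 4 * (LL) + (1/2 : ℝ) * (qψ 1) ^ 5 * (qψ 2) ^ 2 * (LL)) * (V 0 2 2) * (hA2 0) +
      ((1/2 : ℝ) * (qψ 2) ^ 8 * (LL) + (1 : ℝ) * (qψ 1) ^ 2 * (qψ 2) ^ 6 * (LL)) * hAp0 +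
      ((1/2 : ℝ) * (qψ 0) * (qψ 1) * (qψ 2) ^ 6 * (LL)) * hAp1 +
      ((-1 : ℝ) * (qψ 0) * (qψ 1) ^ 2 * (qψ 2) ^ 5 * (LL)) * hAp2 +
      ((1/4 : ℝ) * (qψ 0) * (qψ 1) ^ 2 * (qψ 2) ^ 4 + (3/4 : ℝ) * (qψ 0) * (qψ 1) ^ 4 * (qψ 2) ^ 2 + (1/2 : ℝ) * (qψ 0) * (qψ 1) ^ 6) * (hB00 0) +
      ((1 : ℝ) * (qψ 1) * (qψ 2) ^ 6 + (1 : ℝ) * (qψ 1) ^ 3 * (qψ 2) ^ 4 + (-1/2 : ℝ) * (qψ 1) ^ 5 * (qψ 2) ^ 2 + (-1/2 : ℝ) * (qψ 1) ^ 7) * (V 0 1 0) * (hB00 0) +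
      ((-1 : ℝ) * (qψ 0) * (qψ 2) ^ 6 + (-1 : ℝ) * (qψ 0) * (qψ 1) ^ 2 * (qψ 2) ^ 4 + (1/2 : ℝ) * (qψ 0) * (qψ 1) ^ 4 * (qψ 2) ^ 2 + (1/2 : ℝ) * (qψ 0) * (qψ 1) ^ 6) * (V 0 1 1) * (hB00 0) +
      ((-1 : ℝ) * (qψ 2) ^ 7 + (-3/2 : ℝ) * (qψ 1) ^ 2 * (qψ 2) ^ 5 + (1/2 : ℝ) * (qψ 1) ^ 4 * (qψ 2) ^ 3 + (1 : ℝ) * (qψ 1) ^ 6 * (qψ 2)) * (V 0 2 0) * (hB00 0) +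
      ((1 : ℝ) * (qψ 0) * (qψ 1) * (qψ 2) ^ 5 + (-1/2 : ℝ) * (qψ 0) * (qψ 1) ^ 3 * (qψ 2) ^ 3 + (-3/2 : ℝ) * (qψ 0) * (qψ 1) ^ 5 * (qψ 2)) * (V 0 2 1) * (hB00 0) +
      ((1 : ℝ) * (qψ 0) * (qψ 2) ^ 6 + (3/2 : ℝ) * (qψ 0) * (qψ 1) ^ 2 * (qψ 2) ^ 4 + (1 : ℝ) * (qψ 0) * (qψ 1) ^ 4 * (qψ 2) ^ 2 + (1/2 : ℝ) * (qψ 0) * (qψ 1) ^ 6) * (V 0 2 2) * (hB00 0) +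
      ((-5/4 : ℝ) * (qψ 1) ^ 3 * (qψ 2) ^ 4 + (-7/4 : ℝ) * (qψ 1) ^ 5 * (qψ 2) ^ 2 + (-1/2 : ℝ) * (qψ 1) ^ 7) * (hB01 0) +
      ((1 : ℝ) * (qψ 0) * (qψ 1) ^ 4 * (qψ 2) ^ 2 + (1/2 : ℝ) * (qψ 0) * (qψ 1) ^ 6) * (V 0 1 0) * (hB01 0) +
      ((-1 : ℝ) * (qψ 1) ^ 3 * (qψ 2) ^ 4 + (-3/2 : ℝ) * (qψ 1) ^ 5 * (qψ 2) ^ 2 + (-1/2 : ℝ) * (qψ 1) ^ 7) * (V 0 1 1) * (hB01 0) +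
      ((-1 : ℝ) * (qψ 0) * (qψ 1) * (qψ 2) ^ 5 + (-3/2 : ℝ) * (qψ 0) * (qψ 1) ^ 3 * (qψ 2) ^ 3 + (-1 : ℝ) * (qψ 0) * (qψ 1) ^ 5 * (qψ 2)) * (V 0 2 0) * (hB01 0) +
      ((2 : ℝ) * (qψ 1) ^ 2 * (qψ 2) ^ 5 + (7/2 : ℝ) * (qψ 1) ^ 4 * (qψ 2) ^ 3 + (3/2 : ℝ) * (qψ 1) ^ 6 * (qψ 2)) * (V 0 2 1) * (hB01 0) +
      ((-3/2 : ℝ) * (qψ 1) ^ 3 * (qψ 2) ^ 4 + (-2 : ℝ) * (qψ 1) ^ 5 * (qψ 2) ^ 2 + (-1/2 : ℝ) * (qψ 1) ^ 7) * (V 0 2 2) * (hB01 0) +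
      ((-5/4 : ℝ) * (qψ 1) * (qψ 2) ^ 6 + (-2 : ℝ) * (qψ 1) ^ 3 * (qψ 2) ^ 4 + (-5/4 : ℝ) * (qψ 1) ^ 5 * (qψ 2) ^ 2 + (-1/2 : ℝ) * (qψ 1) ^ 7) * (hB10 0) +
      ((1/2 : ℝ) * (qψ 0) * (qψ 1) ^ 4 * (qψ 2) ^ 2 + (1/2 : ℝ) * (qψ 0) * (qψ 1) ^ 6) * (V 0 1 0) * (hB10 0) +
      ((-1/2 : ℝ) * (qψ 1) ^ 3 * (qψ 2) ^ 4 + (-1 : ℝ) * (qψ 1) ^ 5 * (qψ 2) ^ 2 + (-1/2 : ℝ) * (qψ 1) ^ 7) * (V 0 1 1) * (hB10 0) +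
      ((1/2 : ℝ) * (qψ 0) * (qψ 1) * (qψ 2) ^ 5 + (-1/2 : ℝ) * (qψ 0) * (qψ 1) ^ 3 * (qψ 2) ^ 3 + (-1 : ℝ) * (qψ 0) * (qψ 1) ^ 5 * (qψ 2)) * (V 0 2 0) * (hB10 0) +
      ((1 : ℝ) * (qψ 2) ^ 7 + (3/2 : ℝ) * (qψ 1) ^ 2 * (qψ 2) ^ 5 + (2 : ℝ) * (qψ 1) ^ 4 * (qψ 2) ^ 3 + (3/2 : ℝ) * (qψ 1) ^ 6 * (qψ 2)) * (V 0 2 1) * (hB10 0) +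
      ((-5/2 : ℝ) * (qψ 1) * (qψ 2) ^ 6 + (-7/2 : ℝ) * (qψ 1) ^ 3 * (qψ 2) ^ 4 + (-3/2 : ℝ) * (qψ 1) ^ 5 * (qψ 2) ^ 2 + (-1/2 : ℝ) * (qψ 1) ^ 7) * (V 0 2 2) * (hB10 0) +
      ((5/4 : ℝ) * (qψ 0) * (qψ 1) ^ 2 * (qψ 2) ^ 4 + (7/4 : ℝ) * (qψ 0) * (qψ 1) ^ 4 * (qψ 2) ^ 2 + (1/2 : ℝ) * (qψ 0) * (qψ 1) ^ 6) * (hB11 0) +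
      ((-1 : ℝ) * (qψ 1) ^ 3 * (qψ 2) ^ 4 + (-3/2 : ℝ) * (qψ 1) ^ 5 * (qψ 2) ^ 2 + (-1/2 : ℝ) * (qψ 1) ^ 7) * (V 0 1 0) * (hB11 0) +
      ((1 : ℝ) * (qψ 0) * (qψ 1) ^ 2 * (qψ 2) ^ 4 + (3/2 : ℝ) * (qψ 0) * (qψ 1) ^ 4 * (qψ 2) ^ 2 + (1/2 : ℝ) * (qψ 0) * (qψ 1) ^ 6) * (V 0 1 1) * (hB11 0) +
      ((1 : ℝ) * (qψ 2) ^ 7 + (5/2 : ℝ) * (qψ 1) ^ 2 * (qψ 2) ^ 5 + (5/2 : ℝ) * (qψ 1) ^ 4 * (qψ 2) ^ 3 + (1 : ℝ) * (qψ 1) ^ 6 * (qψ 2)) * (V 0 2 0) * (hB11 0) +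
      ((-2 : ℝ) * (qψ 0) * (qψ 1) * (qψ 2) ^ 5 + (-7/2 : ℝ) * (qψ 0) * (qψ 1) ^ 3 * (qψ 2) ^ 3 + (-3/2 : ℝ) * (qψ 0) * (qψ 1) ^ 5 * (qψ 2)) * (V 0 2 1) * (hB11 0) +
      ((3/2 : ℝ) * (qψ 0) * (qψ 1) ^ 2 * (qψ 2) ^ 4 + (2 : ℝ) * (qψ 0) * (qψ 1) ^ 4 * (qψ 2) ^ 2 + (1/2 : ℝ) * (qψ 0) * (qψ 1) ^ 6) * (V 0 2 2) * (hB11 0) +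
      ((1 : ℝ) * (qψ 1) * (qψ 2) ^ 7 + (1 : ℝ) * (qψ 1) ^ 3 * (qψ 2) ^ 5) * hBp00 +
      ((-1/2 : ℝ) * (qψ 1) * (qψ 2) ^ 7 + (-1 : ℝ) * (qψ 1) ^ 3 * (qψ 2) ^ 5) * hBp11 +
      ((-1/2 : ℝ) * (qψ 2) ^ 8 + (-1 : ℝ) * (qψ 1) ^ 2 * (qψ 2) ^ 6) * hBp12 +
      ((-1/2 : ℝ) * (qψ 0) * (qψ 1) * (qψ 2) ^ 6) * hBp20 +
      ((1 : ℝ) * (qψ 1) * (qψ 2) ^ 7 * (LL) + (1 : ℝ) * (qψ 1) ^ 3 * (qψ 2) ^ 5 * (LL)) * hC012 +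
      ((-1 : ℝ) * (qψ 0) * (qψ 2) ^ 7 * (LL) + (-1 : ℝ) * (qψ 0) * (qψ 1) ^ 2 * (qψ 2) ^ 5 * (LL)) * hC112 +
      (- ((1 : ℝ) * (qψ 2) ^ 7 * (V 0 0 2) * (V 0 2 1) + (1 : ℝ) * (qψ 2) ^ 7 * (V 0 1 2) * (V 0 2 0) + (1 : ℝ) * (qψ 2) ^ 7 * (V 0 2 0) * (V 0 2 1) + (1/2 : ℝ) * (qψ 2) ^ 8 * (deriv (fun s => V s 1 1) 0) + (-1/2 : ℝ) * (qψ 2) ^ 8 * (deriv (fun s => V s 2 2) 0) + (-5/4 : ℝ) * (qψ 1) * (qψ 2) ^ 6 * (V 0 0 2) + (-5/2 : ℝ) * (qψ 1) * (qψ 2) ^ 6 * (V 0 0 2) * (V 0 2 2) + (-1/2 : ℝ) * (qψ 1) * (qψ 2) ^ 7 * (deriv (fun s => V s 1 2) 0) + (-1/2 : ℝ) * (qψ 1) * (qψ 2) ^ 7 * (deriv (fun s => V s 2 1) 0) + (1 : ℝ) * (qψ 1) * (qψ 2) ^ 7 * (LL) * (deriv (fun s => m 0 s 0) 0) + (3/2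 : ℝ) * (qψ 1) ^ 2 * (qψ 2) ^ 5 * (V 0 0 2) * (V 0 2 1) + (5/2 : ℝ) * (qψ 1) ^ 2 * (qψ 2) ^ 5 * (V 0 1 2) * (V 0 2 0) + (9/2 : ℝ) * (qψ 1) ^ 2 * (qψ 2) ^ 5 * (V 0 2 0) * (V 0 2 1) + (1 : ℝ) * (qψ 1) ^ 2 * (qψ 2) ^ 6 * (deriv (fun s => V s 1 1) 0) + (-1 : ℝ) * (qψ 1) ^ 2 * (qψ 2) ^ 6 * (deriv (fun s => V s 2 2) 0) + (-2 : ℝ) * (qψ 1) ^ 3 * (qψ 2) ^ 4 * (V 0 0 2) + (-1/2 : ℝ) * (qψ 1) ^ 3 * (qψ 2) ^ 4 * (V 0 0 2) * (V 0 1 1) + (-7/2 : ℝ) * (qψ 1) ^ 3 * (qψ 2) ^ 4 * (V 0 0 2) * (V 0 2 2) + (-1 : ℝ) * (qψ 1) ^ 3 * (qψ 2) ^ 4 * (V 0 1 0) * (V 0 1 2) + (-1 : ℝ) * (qψ 1) ^ 3 * (qψ 2) ^ 4 * (V 0 1 0) * (V 0 2 1) + (-1 : ℝ) * (qψ 1)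 ^ 3 * (qψ 2) ^ 4 * (V 0 1 1) * (V 0 2 0) + (-5/4 : ℝ) * (qψ 1) ^ 3 * (qψ 2) ^ 4 * (V 0 2 0) + (-3/2 : ℝ) * (qψ 1) ^ 3 * (qψ 2) ^ 4 * (V 0 2 0) * (V 0 2 2) + (-1 : ℝ) * (qψ 1) ^ 3 * (qψ 2) ^ 5 * (deriv (fun s => V s 1 2) 0) + (-1 : ℝ) * (qψ 1) ^ 3 * (qψ 2) ^ 5 * (deriv (fun s => V s 2 1) 0) + (1 : ℝ) * (qψ 1) ^ 3 * (qψ 2) ^ 5 * (LL) * (deriv (fun s => m 0 s 0) 0) + (2 : ℝ) * (qψ 1) ^ 4 * (qψ 2) ^ 3 * (V 0 0 2) * (V 0 2 1) + (5/2 : ℝ) * (qψ 1) ^ 4 * (qψ 2) ^ 3 * (V 0 1 2) * (V 0 2 0) + (6 : ℝ) * (qψ 1) ^ 4 * (qψ 2) ^ 3 * (V 0 2 0) * (V 0 2 1) + (-5/4 : ℝ) * (qψ 1) ^ 5 * (qψ 2) ^ 2 * (V 0 0 2) + (-1 : ℝ) * (qψ 1) ^ 5 * (qψ 2) ^ 2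 * (V 0 0 2) * (V 0 1 1) + (-3/2 : ℝ) * (qψ 1) ^ 5 * (qψ 2) ^ 2 * (V 0 0 2) * (V 0 2 2) + (-3/2 : ℝ) * (qψ 1) ^ 5 * (qψ 2) ^ 2 * (V 0 1 0) * (V 0 1 2) + (-3/2 : ℝ) * (qψ 1) ^ 5 * (qψ 2) ^ 2 * (V 0 1 0) * (V 0 2 1) + (-3/2 : ℝ) * (qψ 1) ^ 5 * (qψ 2) ^ 2 * (V 0 1 1) * (V 0 2 0) + (-7/4 : ℝ) * (qψ 1) ^ 5 * (qψ 2) ^ 2 * (V 0 2 0) + (-2 : ℝ) * (qψ 1) ^ 5 * (qψ 2) ^ 2 * (V 0 2 0) * (V 0 2 2) + (3/2 : ℝ) * (qψ 1) ^ 6 * (qψ 2) * (V 0 0 2) * (V 0 2 1) + (1 : ℝ) * (qψ 1) ^ 6 * (qψ 2) * (V 0 1 2) * (V 0 2 0) + (5/2 : ℝ) * (qψ 1) ^ 6 * (qψ 2) * (V 0 2 0) * (V 0 2 1) + (-1/2 : ℝ) * (qψ 1) ^ 7 * (V 0 0 2) + (-1/2 : ℝ) * (qψ 1) ^ 7 *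 (V 0 0 2) * (V 0 1 1) + (-1/2 : ℝ) * (qψ 1) ^ 7 * (V 0 0 2) * (V 0 2 2) + (-1/2 : ℝ) * (qψ 1) ^ 7 * (V 0 1 0) * (V 0 1 2) + (-1/2 : ℝ) * (qψ 1) ^ 7 * (V 0 1 0) * (V 0 2 1) + (-1/2 : ℝ) * (qψ 1) ^ 7 * (V 0 1 1) * (V 0 2 0) + (-1/2 : ℝ) * (qψ 1) ^ 7 * (V 0 2 0) + (-1/2 : ℝ) * (qψ 1) ^ 7 * (V 0 2 0) * (V 0 2 2) + (1/2 : ℝ) * (qψ 0) * (qψ 1) * (qψ 2) ^ 5 * (V 0 0 2) * (V 0 2 0) + (-2 : ℝ) * (qψ 0) * (qψ 1) * (qψ 2) ^ 5 * (V 0 1 2) * (V 0 2 1) + (-1 : ℝ) * (qψ 0) * (qψ 1) * (qψ 2) ^ 5 * (V 0 2 0) * (V 0 2 0) + (-2 : ℝ) * (qψ 0) * (qψ 1) * (qψ 2) ^ 5 * (V 0 2 1) * (V 0 2 1) + (1/2 : ℝ) * (qψ 0) * (qψ 1) * (qψ 2) ^ 6 * (deriv (fun s => V s 0 1) 0) +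 (1 : ℝ) * (qψ 0) * (qψ 1) ^ 2 * (qψ 2) ^ 4 * (V 0 1 1) * (V 0 1 2) + (1 : ℝ) * (qψ 0) * (qψ 1) ^ 2 * (qψ 2) ^ 4 * (V 0 1 1) * (V 0 2 1) + (5/4 : ℝ) * (qψ 0) * (qψ 1) ^ 2 * (qψ 2) ^ 4 * (V 0 1 2) + (3/2 : ℝ) * (qψ 0) * (qψ 1) ^ 2 * (qψ 2) ^ 4 * (V 0 1 2) * (V 0 2 2) + (5/4 : ℝ) * (qψ 0) * (qψ 1) ^ 2 * (qψ 2) ^ 4 * (V 0 2 1) + (3/2 : ℝ) * (qψ 0) * (qψ 1) ^ 2 * (qψ 2) ^ 4 * (V 0 2 1) * (V 0 2 2) + (-1/2 : ℝ) * (qψ 0) * (qψ 1) ^ 3 * (qψ 2) ^ 3 * (V 0 0 2) * (V 0 2 0) + (-7/2 : ℝ) * (qψ 0) * (qψ 1) ^ 3 * (qψ 2) ^ 3 * (V 0 1 2) * (V 0 2 1) + (-3/2 : ℝ) * (qψ 0) * (qψ 1) ^ 3 * (qψ 2) ^ 3 * (V 0 2 0) * (V 0 2 0) + (-7/2 : ℝ)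 * (qψ 0) * (qψ 1) ^ 3 * (qψ 2) ^ 3 * (V 0 2 1) * (V 0 2 1) + (1/2 : ℝ) * (qψ 0) * (qψ 1) ^ 4 * (qψ 2) ^ 2 * (V 0 0 2) * (V 0 1 0) + (1 : ℝ) * (qψ 0) * (qψ 1) ^ 4 * (qψ 2) ^ 2 * (V 0 1 0) * (V 0 2 0) + (3/2 : ℝ) * (qψ 0) * (qψ 1) ^ 4 * (qψ 2) ^ 2 * (V 0 1 1) * (V 0 1 2) + (3/2 : ℝ) * (qψ 0) * (qψ 1) ^ 4 * (qψ 2) ^ 2 * (V 0 1 1) * (V 0 2 1) + (7/4 : ℝ) * (qψ 0) * (qψ 1) ^ 4 * (qψ 2) ^ 2 * (V 0 1 2) + (2 : ℝ) * (qψ 0) * (qψ 1) ^ 4 * (qψ 2) ^ 2 * (V 0 1 2) * (V 0 2 2) + (7/4 : ℝ) * (qψ 0) * (qψ 1) ^ 4 * (qψ 2) ^ 2 * (V 0 2 1) + (2 : ℝ) * (qψ 0) * (qψ 1) ^ 4 * (qψ 2) ^ 2 * (V 0 2 1) * (V 0 2 2) + (-1 : ℝ) * (qψ 0) * (qψ 1)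 ^ 5 * (qψ 2) * (V 0 0 2) * (V 0 2 0) + (-3/2 : ℝ) * (qψ 0) * (qψ 1) ^ 5 * (qψ 2) * (V 0 1 2) * (V 0 2 1) + (-1 : ℝ) * (qψ 0) * (qψ 1) ^ 5 * (qψ 2) * (V 0 2 0) * (V 0 2 0) + (-3/2 : ℝ) * (qψ 0) * (qψ 1) ^ 5 * (qψ 2) * (V 0 2 1) * (V 0 2 1) + (1/2 : ℝ) * (qψ 0) * (qψ 1) ^ 6 * (V 0 0 2) * (V 0 1 0) + (1/2 : ℝ) * (qψ 0) * (qψ 1) ^ 6 * (V 0 1 0) * (V 0 2 0) + (1/2 : ℝ) * (qψ 0) * (qψ 1) ^ 6 * (V 0 1 1) * (V 0 1 2) + (1/2 : ℝ) * (qψ 0) * (qψ 1) ^ 6 * (V 0 1 1) * (V 0 2 1) + (1/2 : ℝ) * (qψ 0) * (qψ 1) ^ 6 * (V 0 1 2) + (1/2 : ℝ) * (qψ 0) * (qψ 1) ^ 6 * (V 0 1 2) * (V 0 2 2) + (1/2 : ℝ) * (qψ 0) * (qψ 1) ^ 6 * (V 0 2 1) + (1/2 : ℝ) * (qψ 0)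 * (qψ 1) ^ 6 * (V 0 2 1) * (V 0 2 2))) * hL0 +
      (- ((-1 : ℝ) * (qψ 2) ^ 7 * (V 0 0 2) * (V 0 2 0) + (-1 : ℝ) * (qψ 2) ^ 7 * (V 0 2 0) * (V 0 2 0) + (1 : ℝ) * (qψ 2) ^ 7 * (V 0 2 1) * (V 0 2 1) + (-1/2 : ℝ) * (qψ 2) ^ 8 * (deriv (fun s => V s 0 1) 0) + (1 : ℝ) * (qψ 1) * (qψ 2) ^ 6 * (V 0 0 2) * (V 0 1 0) + (1 : ℝ) * (qψ 1) * (qψ 2) ^ 6 * (V 0 1 0) * (V 0 2 0) + (-5/4 : ℝ) * (qψ 1) * (qψ 2) ^ 6 * (V 0 2 1) + (-5/2 : ℝ) * (qψ 1) * (qψ 2) ^ 6 * (V 0 2 1) * (V 0 2 2) + (1 : ℝ) * (qψ 1) * (qψ 2) ^ 7 * (deriv (fun s => V s 0 2) 0) + (1 : ℝ) * (qψ 1) * (qψ 2) ^ 7 * (deriv (fun s => V s 2 0) 0) + (-3/2 : ℝ) * (qψ 1) ^ 2 * (qψ 2) ^ 5 * (V 0 0 2) * (V 0 2 0) + (2 :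 ℝ) * (qψ 1) ^ 2 * (qψ 2) ^ 5 * (V 0 1 2) * (V 0 2 1) + (-3/2 : ℝ) * (qψ 1) ^ 2 * (qψ 2) ^ 5 * (V 0 2 0) * (V 0 2 0) + (3/2 : ℝ) * (qψ 1) ^ 2 * (qψ 2) ^ 5 * (V 0 2 1) * (V 0 2 1) + (-1 : ℝ) * (qψ 1) ^ 2 * (qψ 2) ^ 6 * (deriv (fun s => V s 0 1) 0) + (1 : ℝ) * (qψ 1) ^ 3 * (qψ 2) ^ 4 * (V 0 0 2) * (V 0 1 0) + (1 : ℝ) * (qψ 1) ^ 3 * (qψ 2) ^ 4 * (V 0 1 0) * (V 0 2 0) + (-1 : ℝ) * (qψ 1) ^ 3 * (qψ 2) ^ 4 * (V 0 1 1) * (V 0 1 2) + (-1/2 : ℝ) * (qψ 1) ^ 3 * (qψ 2) ^ 4 * (V 0 1 1) * (V 0 2 1) + (-5/4 : ℝ) * (qψ 1) ^ 3 * (qψ 2) ^ 4 * (V 0 1 2) + (-3/2 : ℝ) * (qψ 1) ^ 3 * (qψ 2) ^ 4 * (V 0 1 2) * (V 0 2 2) + (-2 : ℝ) * (qψ 1)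 ^ 3 * (qψ 2) ^ 4 * (V 0 2 1) + (-7/2 : ℝ) * (qψ 1) ^ 3 * (qψ 2) ^ 4 * (V 0 2 1) * (V 0 2 2) + (1 : ℝ) * (qψ 1) ^ 3 * (qψ 2) ^ 5 * (deriv (fun s => V s 0 2) 0) + (1 : ℝ) * (qψ 1) ^ 3 * (qψ 2) ^ 5 * (deriv (fun s => V s 2 0) 0) + (1/2 : ℝ) * (qψ 1) ^ 4 * (qψ 2) ^ 3 * (V 0 0 2) * (V 0 2 0) + (7/2 : ℝ) * (qψ 1) ^ 4 * (qψ 2) ^ 3 * (V 0 1 2) * (V 0 2 1) + (1/2 : ℝ) * (qψ 1) ^ 4 * (qψ 2) ^ 3 * (V 0 2 0) * (V 0 2 0) + (2 : ℝ) * (qψ 1) ^ 4 * (qψ 2) ^ 3 * (V 0 2 1) * (V 0 2 1) + (-1/2 : ℝ) * (qψ 1) ^ 5 * (qψ 2) ^ 2 * (V 0 0 2) * (V 0 1 0) + (-1/2 : ℝ) * (qψ 1) ^ 5 * (qψ 2) ^ 2 * (V 0 1 0) * (V 0 2 0) + (-3/2 : ℝ) * (qψ 1) ^ 5 * (qψ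 2) ^ 2 * (V 0 1 1) * (V 0 1 2) + (-1 : ℝ) * (qψ 1) ^ 5 * (qψ 2) ^ 2 * (V 0 1 1) * (V 0 2 1) + (-7/4 : ℝ) * (qψ 1) ^ 5 * (qψ 2) ^ 2 * (V 0 1 2) + (-2 : ℝ) * (qψ 1) ^ 5 * (qψ 2) ^ 2 * (V 0 1 2) * (V 0 2 2) + (-5/4 : ℝ) * (qψ 1) ^ 5 * (qψ 2) ^ 2 * (V 0 2 1) + (-3/2 : ℝ) * (qψ 1) ^ 5 * (qψ 2) ^ 2 * (V 0 2 1) * (V 0 2 2) + (1 : ℝ) * (qψ 1) ^ 6 * (qψ 2) * (V 0 0 2) * (V 0 2 0) + (3/2 : ℝ) * (qψ 1) ^ 6 * (qψ 2) * (V 0 1 2) * (V 0 2 1) + (1 : ℝ) * (qψ 1) ^ 6 * (qψ 2) * (V 0 2 0) * (V 0 2 0) + (3/2 : ℝ) * (qψ 1) ^ 6 * (qψ 2) * (V 0 2 1) * (V 0 2 1) + (-1/2 : ℝ) * (qψ 1) ^ 7 * (V 0 0 2) * (V 0 1 0) + (-1/2 : ℝ) * (qψ 1) ^ 7 * (V 0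 1 0) * (V 0 2 0) + (-1/2 : ℝ) * (qψ 1) ^ 7 * (V 0 1 1) * (V 0 1 2) + (-1/2 : ℝ) * (qψ 1) ^ 7 * (V 0 1 1) * (V 0 2 1) + (-1/2 : ℝ) * (qψ 1) ^ 7 * (V 0 1 2) + (-1/2 : ℝ) * (qψ 1) ^ 7 * (V 0 1 2) * (V 0 2 2) + (-1/2 : ℝ) * (qψ 1) ^ 7 * (V 0 2 1) + (-1/2 : ℝ) * (qψ 1) ^ 7 * (V 0 2 1) * (V 0 2 2) + (-1 : ℝ) * (qψ 0) * (qψ 2) ^ 6 * (V 0 0 2) * (V 0 1 1) + (1 : ℝ) * (qψ 0) * (qψ 2) ^ 6 * (V 0 0 2) * (V 0 2 2) + (-1 : ℝ) * (qψ 0) * (qψ 2) ^ 6 * (V 0 1 1) * (V 0 2 0) + (1 : ℝ) * (qψ 0) * (qψ 2) ^ 6 * (V 0 2 0) * (V 0 2 2) + (-1 : ℝ) * (qψ 0) * (qψ 2) ^ 7 * (LL) * (deriv (fun s => m 0 s 0) 0) + (1 : ℝ) * (qψ 0) * (qψ 1) * (qψ 2) ^ 5 * (V 0 0 2) * (V 0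 2 1) + (-1 : ℝ) * (qψ 0) * (qψ 1) * (qψ 2) ^ 5 * (V 0 1 2) * (V 0 2 0) + (3/2 : ℝ) * (qψ 0) * (qψ 1) * (qψ 2) ^ 5 * (V 0 2 0) * (V 0 2 1) + (-1/2 : ℝ) * (qψ 0) * (qψ 1) * (qψ 2) ^ 6 * (deriv (fun s => V s 0 0) 0) + (-1/2 : ℝ) * (qψ 0) * (qψ 1) * (qψ 2) ^ 6 * (deriv (fun s => V s 2 2) 0) + (1/4 : ℝ) * (qψ 0) * (qψ 1) ^ 2 * (qψ 2) ^ 4 * (V 0 0 2) + (-1 : ℝ) * (qψ 0) * (qψ 1) ^ 2 * (qψ 2) ^ 4 * (V 0 0 2) * (V 0 1 1) + (3/2 : ℝ) * (qψ 0) * (qψ 1) ^ 2 * (qψ 2) ^ 4 * (V 0 0 2) * (V 0 2 2) + (-1 : ℝ) * (qψ 0) * (qψ 1) ^ 2 * (qψ 2) ^ 4 * (V 0 1 1) * (V 0 2 0) + (1/4 : ℝ) * (qψ 0) * (qψ 1) ^ 2 * (qψ 2) ^ 4 * (V 0 2 0) + (3/2 : ℝ) * (qψ 0) * (qψ 1)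 ^ 2 * (qψ 2) ^ 4 * (V 0 2 0) * (V 0 2 2) + (-1 : ℝ) * (qψ 0) * (qψ 1) ^ 2 * (qψ 2) ^ 5 * (LL) * (deriv (fun s => m 0 s 0) 0) + (-1/2 : ℝ) * (qψ 0) * (qψ 1) ^ 3 * (qψ 2) ^ 3 * (V 0 0 2) * (V 0 2 1) + (-3/2 : ℝ) * (qψ 0) * (qψ 1) ^ 3 * (qψ 2) ^ 3 * (V 0 1 2) * (V 0 2 0) + (-1 : ℝ) * (qψ 0) * (qψ 1) ^ 3 * (qψ 2) ^ 3 * (V 0 2 0) * (V 0 2 1) + (3/4 : ℝ) * (qψ 0) * (qψ 1) ^ 4 * (qψ 2) ^ 2 * (V 0 0 2) + (1/2 : ℝ) * (qψ 0) * (qψ 1) ^ 4 * (qψ 2) ^ 2 * (V 0 0 2) * (V 0 1 1) + (1 : ℝ) * (qψ 0) * (qψ 1) ^ 4 * (qψ 2) ^ 2 * (V 0 0 2) * (V 0 2 2) + (1 : ℝ) * (qψ 0) * (qψ 1) ^ 4 * (qψ 2) ^ 2 * (V 0 1 0) * (V 0 1 2) + (1/2 : ℝ) * (qψ 0) * (qψ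 1) ^ 4 * (qψ 2) ^ 2 * (V 0 1 0) * (V 0 2 1) + (1/2 : ℝ) * (qψ 0) * (qψ 1) ^ 4 * (qψ 2) ^ 2 * (V 0 1 1) * (V 0 2 0) + (3/4 : ℝ) * (qψ 0) * (qψ 1) ^ 4 * (qψ 2) ^ 2 * (V 0 2 0) + (1 : ℝ) * (qψ 0) * (qψ 1) ^ 4 * (qψ 2) ^ 2 * (V 0 2 0) * (V 0 2 2) + (-3/2 : ℝ) * (qψ 0) * (qψ 1) ^ 5 * (qψ 2) * (V 0 0 2) * (V 0 2 1) + (-1 : ℝ) * (qψ 0) * (qψ 1) ^ 5 * (qψ 2) * (V 0 1 2) * (V 0 2 0) + (-5/2 : ℝ) * (qψ 0) * (qψ 1) ^ 5 * (qψ 2) * (V 0 2 0) * (V 0 2 1) + (1/2 : ℝ) * (qψ 0) * (qψ 1) ^ 6 * (V 0 0 2) + (1/2 : ℝ) * (qψ 0) * (qψ 1) ^ 6 * (V 0 0 2) * (V 0 1 1) + (1/2 : ℝ) * (qψ 0) * (qψ 1) ^ 6 * (V 0 0 2) * (V 0 2 2) + (1/2 : ℝ) * (qψ 0) * (qψ 1)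 ^ 6 * (V 0 1 0) * (V 0 1 2) + (1/2 : ℝ) * (qψ 0) * (qψ 1) ^ 6 * (V 0 1 0) * (V 0 2 1) + (1/2 : ℝ) * (qψ 0) * (qψ 1) ^ 6 * (V 0 1 1) * (V 0 2 0) + (1/2 : ℝ) * (qψ 0) * (qψ 1) ^ 6 * (V 0 2 0) + (1/2 : ℝ) * (qψ 0) * (qψ 1) ^ 6 * (V 0 2 0) * (V 0 2 2))) * hL1 +
      (- ((-1 : ℝ) * (qψ 2) ^ 7 * (V 0 0 0) * (V 0 2 1) + (-1 : ℝ) * (qψ 2) ^ 7 * (V 0 1 1) * (V 0 2 1) + (1/2 : ℝ) * (qψ 2) ^ 8 * (deriv (fun s => V s 2 0) 0) + (5/4 : ℝ) * (qψ 1) * (qψ 2) ^ 6 * (V 0 0 0) + (5/2 : ℝ) * (qψ 1) * (qψ 2) ^ 6 * (V 0 0 0) * (V 0 2 2) + (-1 : ℝ) * (qψ 1) * (qψ 2) ^ 6 * (V 0 0 1) * (V 0 1 0) + (-1 : ℝ) * (qψ 1) * (qψ 2) ^ 6 * (V 0 1 0) * (V 0 1 0) + (5/4 : ℝ) * (qψ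 1) * (qψ 2) ^ 6 * (V 0 1 1) + (5/2 : ℝ) * (qψ 1) * (qψ 2) ^ 6 * (V 0 1 1) * (V 0 2 2) + (-1/2 : ℝ) * (qψ 1) * (qψ 2) ^ 7 * (deriv (fun s => V s 0 1) 0) + (-1/2 : ℝ) * (qψ 1) * (qψ 2) ^ 7 * (deriv (fun s => V s 1 0) 0) + (-7/2 : ℝ) * (qψ 1) ^ 2 * (qψ 2) ^ 5 * (V 0 0 0) * (V 0 2 1) + (-1 : ℝ) * (qψ 1) ^ 2 * (qψ 2) ^ 5 * (V 0 0 1) * (V 0 2 0) + (-1 : ℝ) * (qψ 1) ^ 2 * (qψ 2) ^ 5 * (V 0 1 0) * (V 0 2 0) + (-7/2 : ℝ) * (qψ 1) ^ 2 * (qψ 2) ^ 5 * (V 0 1 1) * (V 0 2 1) + (1 : ℝ) * (qψ 1) ^ 2 * (qψ 2) ^ 6 * (deriv (fun s => V s 2 0) 0) + (13/4 : ℝ) * (qψ 1) ^ 3 * (qψ 2) ^ 4 * (V 0 0 0) + (3/2 : ℝ) * (qψ 1) ^ 3 * (qψ 2) ^ 4 * (V 0 0 0) * (V 0 1 1) +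 (5 : ℝ) * (qψ 1) ^ 3 * (qψ 2) ^ 4 * (V 0 0 0) * (V 0 2 2) + (13/4 : ℝ) * (qψ 1) ^ 3 * (qψ 2) ^ 4 * (V 0 1 1) + (3/2 : ℝ) * (qψ 1) ^ 3 * (qψ 2) ^ 4 * (V 0 1 1) * (V 0 1 1) + (5 : ℝ) * (qψ 1) ^ 3 * (qψ 2) ^ 4 * (V 0 1 1) * (V 0 2 2) + (-11/2 : ℝ) * (qψ 1) ^ 4 * (qψ 2) ^ 3 * (V 0 0 0) * (V 0 2 1) + (-3 : ℝ) * (qψ 1) ^ 4 * (qψ 2) ^ 3 * (V 0 0 1) * (V 0 2 0) + (-3 : ℝ) * (qψ 1) ^ 4 * (qψ 2) ^ 3 * (V 0 1 0) * (V 0 2 0) + (-11/2 : ℝ) * (qψ 1) ^ 4 * (qψ 2) ^ 3 * (V 0 1 1) * (V 0 2 1) + (3 : ℝ) * (qψ 1) ^ 5 * (qψ 2) ^ 2 * (V 0 0 0) + (5/2 : ℝ) * (qψ 1) ^ 5 * (qψ 2) ^ 2 * (V 0 0 0) * (V 0 1 1) + (7/2 : ℝ) * (qψ 1) ^ 5 *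 (qψ 2) ^ 2 * (V 0 0 0) * (V 0 2 2) + (2 : ℝ) * (qψ 1) ^ 5 * (qψ 2) ^ 2 * (V 0 0 1) * (V 0 1 0) + (2 : ℝ) * (qψ 1) ^ 5 * (qψ 2) ^ 2 * (V 0 1 0) * (V 0 1 0) + (3 : ℝ) * (qψ 1) ^ 5 * (qψ 2) ^ 2 * (V 0 1 1) + (5/2 : ℝ) * (qψ 1) ^ 5 * (qψ 2) ^ 2 * (V 0 1 1) * (V 0 1 1) + (7/2 : ℝ) * (qψ 1) ^ 5 * (qψ 2) ^ 2 * (V 0 1 1) * (V 0 2 2) + (-3 : ℝ) * (qψ 1) ^ 6 * (qψ 2) * (V 0 0 0) * (V 0 2 1) + (-2 : ℝ) * (qψ 1) ^ 6 * (qψ 2) * (V 0 0 1) * (V 0 2 0) + (-2 : ℝ) * (qψ 1) ^ 6 * (qψ 2) * (V 0 1 0) * (V 0 2 0) + (-3 : ℝ) * (qψ 1) ^ 6 * (qψ 2) * (V 0 1 1) * (V 0 2 1) + (1 : ℝ) * (qψ 1) ^ 7 * (V 0 0 0) + (1 : ℝ) * (qψ 1) ^ 7 * (V 0 0 0) * (V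 0 1 1) + (1 : ℝ) * (qψ 1) ^ 7 * (V 0 0 0) * (V 0 2 2) + (1 : ℝ) * (qψ 1) ^ 7 * (V 0 0 1) * (V 0 1 0) + (1 : ℝ) * (qψ 1) ^ 7 * (V 0 1 0) * (V 0 1 0) + (1 : ℝ) * (qψ 1) ^ 7 * (V 0 1 1) + (1 : ℝ) * (qψ 1) ^ 7 * (V 0 1 1) * (V 0 1 1) + (1 : ℝ) * (qψ 1) ^ 7 * (V 0 1 1) * (V 0 2 2) + (1 : ℝ) * (qψ 0) * (qψ 2) ^ 6 * (V 0 0 1) * (V 0 1 1) + (-1 : ℝ) * (qψ 0) * (qψ 2) ^ 6 * (V 0 0 1) * (V 0 2 2) + (1 : ℝ) * (qψ 0) * (qψ 2) ^ 6 * (V 0 1 0) * (V 0 1 1) + (-1 : ℝ) * (qψ 0) * (qψ 2) ^ 6 * (V 0 1 0) * (V 0 2 2) + (1/2 : ℝ) * (qψ 0) * (qψ 1) * (qψ 2) ^ 5 * (V 0 0 0) * (V 0 2 0) + (1 : ℝ) * (qψ 0) * (qψ 1) * (qψ 2) ^ 5 * (V 0 0 1) * (V 0 2 1) + (1 : ℝ)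 * (qψ 0) * (qψ 1) * (qψ 2) ^ 5 * (V 0 1 0) * (V 0 2 1) + (1/2 : ℝ) * (qψ 0) * (qψ 1) * (qψ 2) ^ 5 * (V 0 1 1) * (V 0 2 0) + (1/2 : ℝ) * (qψ 0) * (qψ 1) * (qψ 2) ^ 6 * (deriv (fun s => V s 1 2) 0) + (-3/2 : ℝ) * (qψ 0) * (qψ 1) ^ 2 * (qψ 2) ^ 4 * (V 0 0 1) + (-3 : ℝ) * (qψ 0) * (qψ 1) ^ 2 * (qψ 2) ^ 4 * (V 0 0 1) * (V 0 2 2) + (-3/2 : ℝ) * (qψ 0) * (qψ 1) ^ 2 * (qψ 2) ^ 4 * (V 0 1 0) + (-3 : ℝ) * (qψ 0) * (qψ 1) ^ 2 * (qψ 2) ^ 4 * (V 0 1 0) * (V 0 2 2) + (2 : ℝ) * (qψ 0) * (qψ 1) ^ 3 * (qψ 2) ^ 3 * (V 0 0 0) * (V 0 2 0) + (4 : ℝ) * (qψ 0) * (qψ 1) ^ 3 * (qψ 2) ^ 3 * (V 0 0 1) * (V 0 2 1) + (4 : ℝ) * (qψ 0) * (qψ 1) ^ 3 * (qψ 2) ^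 3 * (V 0 1 0) * (V 0 2 1) + (2 : ℝ) * (qψ 0) * (qψ 1) ^ 3 * (qψ 2) ^ 3 * (V 0 1 1) * (V 0 2 0) + (-3/2 : ℝ) * (qψ 0) * (qψ 1) ^ 4 * (qψ 2) ^ 2 * (V 0 0 0) * (V 0 1 0) + (-5/2 : ℝ) * (qψ 0) * (qψ 1) ^ 4 * (qψ 2) ^ 2 * (V 0 0 1) + (-2 : ℝ) * (qψ 0) * (qψ 1) ^ 4 * (qψ 2) ^ 2 * (V 0 0 1) * (V 0 1 1) + (-3 : ℝ) * (qψ 0) * (qψ 1) ^ 4 * (qψ 2) ^ 2 * (V 0 0 1) * (V 0 2 2) + (-5/2 : ℝ) * (qψ 0) * (qψ 1) ^ 4 * (qψ 2) ^ 2 * (V 0 1 0) + (-7/2 : ℝ) * (qψ 0) * (qψ 1) ^ 4 * (qψ 2) ^ 2 * (V 0 1 0) * (V 0 1 1) + (-3 : ℝ) * (qψ 0) * (qψ 1) ^ 4 * (qψ 2) ^ 2 * (V 0 1 0) * (V 0 2 2) + (2 : ℝ) * (qψ 0) * (qψ 1) ^ 5 * (qψ 2) * (V 0 0 0) * (V 0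 2 0) + (3 : ℝ) * (qψ 0) * (qψ 1) ^ 5 * (qψ 2) * (V 0 0 1) * (V 0 2 1) + (3 : ℝ) * (qψ 0) * (qψ 1) ^ 5 * (qψ 2) * (V 0 1 0) * (V 0 2 1) + (2 : ℝ) * (qψ 0) * (qψ 1) ^ 5 * (qψ 2) * (V 0 1 1) * (V 0 2 0) + (-1 : ℝ) * (qψ 0) * (qψ 1) ^ 6 * (V 0 0 0) * (V 0 1 0) + (-1 : ℝ) * (qψ 0) * (qψ 1) ^ 6 * (V 0 0 1) + (-1 : ℝ) * (qψ 0) * (qψ 1) ^ 6 * (V 0 0 1) * (V 0 1 1) + (-1 : ℝ) * (qψ 0) * (qψ 1) ^ 6 * (V 0 0 1) * (V 0 2 2) + (-1 : ℝ) * (qψ 0) * (qψ 1) ^ 6 * (V 0 1 0) + (-2 : ℝ) * (qψ 0) * (qψ 1) ^ 6 * (V 0 1 0) * (V 0 1 1) + (-1 : ℝ) * (qψ 0) * (qψ 1) ^ 6 * (V 0 1 0) * (V 0 2 2))) * hL2 +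
      (- ((-1/2 : ℝ) * (qψ 1) * (qψ 2) ^ 5 * (LL) + (1 : ℝ) * (qψ 1) * (qψ 2) ^ 5 * (LL) * (V 0 0 1) * (V 0 1 0) + (1 : ℝ) * (qψ 1) * (qψ 2) ^ 5 * (LL) * (V 0 0 2) * (V 0 2 0) + (-3/2 : ℝ) * (qψ 1) * (qψ 2) ^ 5 * (LL) * (V 0 1 1) + (-1 : ℝ) * (qψ 1) * (qψ 2) ^ 5 * (LL) * (V 0 1 1) * (V 0 1 1) + (-1 : ℝ) * (qψ 1) * (qψ 2) ^ 5 * (LL) * (V 0 1 1) * (V 0 2 2) + (-2 : ℝ) * (qψ 1) * (qψ 2) ^ 5 * (LL) * (V 0 1 2) * (V 0 2 1) + (-1 : ℝ) * (qψ 1) * (qψ 2) ^ 5 * (LL) * (V 0 2 0) * (V 0 2 0) + (-2 : ℝ) * (qψ 1) * (qψ 2) ^ 5 * (LL) * (V 0 2 1) * (V 0 2 1) + (-1/2 : ℝ) * (qψ 1) * (qψ 2) ^ 5 * (LL) * (V 0 2 2) + (1 : ℝ) * (qψ 1) * (qψ 2) ^ 6 * (LL) * (deriv (fun s => V s 0 1)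 0) + (1 : ℝ) * (qψ 1) ^ 2 * (qψ 2) ^ 4 * (LL) * (V 0 0 1) * (V 0 2 0) + (-1 : ℝ) * (qψ 1) ^ 2 * (qψ 2) ^ 4 * (LL) * (V 0 0 2) * (V 0 1 0) + (1 : ℝ) * (qψ 1) ^ 2 * (qψ 2) ^ 4 * (LL) * (V 0 1 1) * (V 0 1 2) + (5 : ℝ) * (qψ 1) ^ 2 * (qψ 2) ^ 4 * (LL) * (V 0 1 1) * (V 0 2 1) + (5/4 : ℝ) * (qψ 1) ^ 2 * (qψ 2) ^ 4 * (LL) * (V 0 1 2) + (3/2 : ℝ) * (qψ 1) ^ 2 * (qψ 2) ^ 4 * (LL) * (V 0 1 2) * (V 0 2 2) + (21/4 : ℝ) * (qψ 1) ^ 2 * (qψ 2) ^ 4 * (LL) * (V 0 2 1) + (11/2 : ℝ) * (qψ 1) ^ 2 * (qψ 2) ^ 4 * (LL) * (V 0 2 1) * (V 0 2 2) + (-1 : ℝ) * (qψ 1) ^ 2 * (qψ 2) ^ 5 * (LL) * (deriv (fun s => V s 0 2) 0) + (-2 : ℝ) * (qψ 1) ^ 3 * (qψ 2) ^ 3 *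 (LL) + (-1 : ℝ) * (qψ 1) ^ 3 * (qψ 2) ^ 3 * (LL) * (V 0 0 1) * (V 0 1 0) + (1/2 : ℝ) * (qψ 1) ^ 3 * (qψ 2) ^ 3 * (LL) * (V 0 0 2) * (V 0 2 0) + (-4 : ℝ) * (qψ 1) ^ 3 * (qψ 2) ^ 3 * (LL) * (V 0 1 1) + (-2 : ℝ) * (qψ 1) ^ 3 * (qψ 2) ^ 3 * (LL) * (V 0 1 1) * (V 0 1 1) + (-4 : ℝ) * (qψ 1) ^ 3 * (qψ 2) ^ 3 * (LL) * (V 0 1 1) * (V 0 2 2) + (-7/2 : ℝ) * (qψ 1) ^ 3 * (qψ 2) ^ 3 * (LL) * (V 0 1 2) * (V 0 2 1) + (-3/2 : ℝ) * (qψ 1) ^ 3 * (qψ 2) ^ 3 * (LL) * (V 0 2 0) * (V 0 2 0) + (-7/2 : ℝ) * (qψ 1) ^ 3 * (qψ 2) ^ 3 * (LL) * (V 0 2 1) * (V 0 2 1) + (-4 : ℝ) * (qψ 1) ^ 3 * (qψ 2) ^ 3 * (LL) * (V 0 2 2) + (-2 : ℝ) * (qψ 1) ^ 3 * (qψ 2)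 ^ 3 * (LL) * (V 0 2 2) * (V 0 2 2) + (2 : ℝ) * (qψ 1) ^ 4 * (qψ 2) ^ 2 * (LL) * (V 0 0 1) * (V 0 2 0) + (1 : ℝ) * (qψ 1) ^ 4 * (qψ 2) ^ 2 * (LL) * (V 0 1 0) * (V 0 2 0) + (3/2 : ℝ) * (qψ 1) ^ 4 * (qψ 2) ^ 2 * (LL) * (V 0 1 1) * (V 0 1 2) + (9/2 : ℝ) * (qψ 1) ^ 4 * (qψ 2) ^ 2 * (LL) * (V 0 1 1) * (V 0 2 1) + (7/4 : ℝ) * (qψ 1) ^ 4 * (qψ 2) ^ 2 * (LL) * (V 0 1 2) + (2 : ℝ) * (qψ 1) ^ 4 * (qψ 2) ^ 2 * (LL) * (V 0 1 2) * (V 0 2 2) + (19/4 : ℝ) * (qψ 1) ^ 4 * (qψ 2) ^ 2 * (LL) * (V 0 2 1) + (5 : ℝ) * (qψ 1) ^ 4 * (qψ 2) ^ 2 * (LL) * (V 0 2 1) * (V 0 2 2) + (-1 : ℝ) * (qψ 1) ^ 5 * (qψ 2) * (LL) + (-1 : ℝ) * (qψ 1) ^ 5 * (qψ 2) * (LL)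 * (V 0 0 1) * (V 0 1 0) + (-1 : ℝ) * (qψ 1) ^ 5 * (qψ 2) * (LL) * (V 0 0 2) * (V 0 2 0) + (-2 : ℝ) * (qψ 1) ^ 5 * (qψ 2) * (LL) * (V 0 1 1) + (-1 : ℝ) * (qψ 1) ^ 5 * (qψ 2) * (LL) * (V 0 1 1) * (V 0 1 1) + (-2 : ℝ) * (qψ 1) ^ 5 * (qψ 2) * (LL) * (V 0 1 1) * (V 0 2 2) + (-3/2 : ℝ) * (qψ 1) ^ 5 * (qψ 2) * (LL) * (V 0 1 2) * (V 0 2 1) + (-1 : ℝ) * (qψ 1) ^ 5 * (qψ 2) * (LL) * (V 0 2 0) * (V 0 2 0) + (-3/2 : ℝ) * (qψ 1) ^ 5 * (qψ 2) * (LL) * (V 0 2 1) * (V 0 2 1) + (-2 : ℝ) * (qψ 1) ^ 5 * (qψ 2) * (LL) * (V 0 2 2) + (-1 : ℝ) * (qψ 1) ^ 5 * (qψ 2) * (LL) * (V 0 2 2) * (V 0 2 2) + (1/2 : ℝ) * (qψ 1) ^ 6 * (LL) * (V 0 0 2) * (V 0 1 0) + (1/2 : ℝ) * (qψ 1) ^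 6 * (LL) * (V 0 1 0) * (V 0 2 0) + (1/2 : ℝ) * (qψ 1) ^ 6 * (LL) * (V 0 1 1) * (V 0 1 2) + (1/2 : ℝ) * (qψ 1) ^ 6 * (LL) * (V 0 1 1) * (V 0 2 1) + (1/2 : ℝ) * (qψ 1) ^ 6 * (LL) * (V 0 1 2) + (1/2 : ℝ) * (qψ 1) ^ 6 * (LL) * (V 0 1 2) * (V 0 2 2) + (1/2 : ℝ) * (qψ 1) ^ 6 * (LL) * (V 0 2 1) + (1/2 : ℝ) * (qψ 1) ^ 6 * (LL) * (V 0 2 1) * (V 0 2 2))) * hlight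
      have final : qψ 1 * qψ 2 ^ 5 * LL * (qψ 1 ^ 2 + qψ 2 ^ 2) = 0 := by
        linear_combination (-4 : ℝ) * key
      have hpos : qψ 1 ^ 2 + qψ 2 ^ 2 ≠ 0 := by
        intro h
        apply hz1
        have h1 : qψ 1 ^ 2 = 0 := by nlinarith [sq_nonneg (qψ 1), sq_nonneg (qψ 2)]
        exact pow_eq_zero_iff (by norm_num) |>.mp h1
      rcases mul_eq_zero.mp final with h | h
      · rcases mul_eq_zero.mp h with h | h
        · rcases mul_eq_zero.mp h with h | h
          · exact hz1 h
          · exact pow_ne_zero 5 hz2 h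
        · exact hLL h
      · exact hpos h
end
end

section
/- Let w, m: ℝ² → ℝ³ be defined by w(ψ) = cot(μ₁/2) e_0 + cot(μ₁/2) coth(ψ) e_1 - coth(ψ) e_2 and m(ψ,α) = s₁/(4sin²(μ₁/2)) e_0 + s₁coth(ψ)/(4sin²(μ₁/2)) e_1 + (α/2)∂_ψ w(ψ), and let q_ψ(ψ) = -q_α(ψ) = ½(coth(ψ)cot(μ₁/2) + cot(μ₂/2)/sinh(ψ)) e_0 + ½cot(μ₁/2) e_1 - ½ e_2 and q_θ(ψ,α) = [s₁coth(ψ)/(4sin²(μ₁/2)) + s₂/(4sin²(μ₂/2)sinh(ψ)) - α(cot(μ₁/2) + cosh(ψ)cot(μ₂/2))/(2sinh²(ψ))] e_0 + s₁/(4sin²(μ₁/2)) e_1, for fixed μ₁, μ₂ ∈ (0,2π), s₁, s₂ ∈ ℝ. Then these data satisfy 1 + w·w + 2 q_ψ·∂_ψ w = 0, ∂_ψ w ∧ ∂_α m = 0, ∂_α m^a q_α^b = -½ ∂_ψ w^a q_ψ^b, and q_ψ·∂_ψ m + q_θ·∂_α m + w·m = 0 (for ψ ≠ 0). -/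
open Real BigOperators Finset

noncomputable section

def ct (x : ℝ) : ℝ := Real.cos x / Real.sin x
def cth (x : ℝ) : ℝ := Real.cosh x / Real.sinh x

/-- w(ψ) = cot(μ₁/2)e₀ + cot(μ₁/2)coth(ψ)e₁ - coth(ψ)e₂. -/
def w14 (μ1 : ℝ) (ψ : ℝ) : V3 := fun a =>
  if a = 0 then ct (μ1/2) else if a = 1 then ct (μ1/2) * cth ψ else -(cth ψ)

/-- m(ψ,α) = s₁/(4sin²(μ₁/2))e₀ + s₁coth(ψ)/(4sin²(μ₁/2))e₁ + (α/2)∂_ψw(ψ). -/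
def m14 (μ1 s1 : ℝ) (ψ α : ℝ) : V3 := fun a =>
  (if a = 0 then s1 / (4 * (Real.sin (μ1/2))^2)
   else if a = 1 then s1 * cth ψ / (4 * (Real.sin (μ1/2))^2) else 0)
  + (α/2) * deriv (fun s => w14 μ1 s a) ψ

/-- q_ψ(ψ) = ½(coth ψ cot(μ₁/2) + cot(μ₂/2)/sinh ψ)e₀ + ½cot(μ₁/2)e₁ - ½e₂. -/
def qpsi14 (μ1 μ2 : ℝ) (ψ : ℝ) : V3 := fun a =>
  if a = 0 then (1/2) * (cth ψ * ct (μ1/2) + ct (μ2/2) / Real.sinh ψ)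
  else if a = 1 then (1/2) * ct (μ1/2) else -(1/2)

/-- q_α = -q_ψ. -/
def qalpha14 (μ1 μ2 : ℝ) (ψ : ℝ) : V3 := fun a => -(qpsi14 μ1 μ2 ψ a)

/-- q_θ(ψ,α). -/
def qtheta14 (μ1 μ2 s1 s2 : ℝ) (ψ α : ℝ) : V3 := fun a =>
  if a = 0 then
    s1 * cth ψ / (4 * (Real.sin (μ1/2))^2) + s2 / (4 * (Real.sin (μ2/2))^2 * Real.sinh ψ)
      - α * (ct (μ1/2) + Real.cosh ψ * ct (μ2/2)) / (2 * (Real.sinh ψ)^2)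
  else if a = 1 then s1 / (4 * (Real.sin (μ1/2))^2) else 0


lemma hasDerivAt_cth {s : ℝ} (hs : s ≠ 0) :
    HasDerivAt cth (-(1/(Real.sinh s)^2)) s := by
  have h := (Real.hasDerivAt_cosh s).div (Real.hasDerivAt_sinh s) (Real.sinh_ne_zero.mpr hs)
  convert h using 1 <;> try rfl
  have h1 := Real.cosh_sq_sub_sinh_sq s
  have hs2 : Real.sinh s ≠ 0 := Real.sinh_ne_zero.mpr hs
  field_simp
  nlinarith [h1]

lemma hasDerivAt_w14 (μ1 : ℝ) {ψ : ℝ} (hψ : ψ ≠ 0) (a : Fin 3) :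
    HasDerivAt (fun s => w14 μ1 s a)
      ((if a = 0 then 0 else if a = 1 then ct (μ1/2) else -1) * (-(1/(Real.sinh ψ)^2))) ψ := by
  fin_cases a
  · simpa [w14] using hasDerivAt_const ψ (ct (μ1/2))
  · simpa [w14] using (hasDerivAt_cth hψ).const_mul (ct (μ1/2))
  · simpa [w14, neg_mul, one_mul, neg_neg] using (hasDerivAt_cth hψ).fun_neg

lemma hasDerivAt_neg_inv_sinh_sq {ψ : ℝ} (hψ : ψ ≠ 0) :
    HasDerivAt (fun s => -(1/(Real.sinh s)^2)) (2*Real.cosh ψ/(Real.sinh ψ)^3) ψ := by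
  have hs : Real.sinh ψ ≠ 0 := Real.sinh_ne_zero.mpr hψ
  have h1 : HasDerivAt (fun s => (Real.sinh s)^2) (2 * Real.sinh ψ * Real.cosh ψ) ψ := by
    simpa using (Real.hasDerivAt_sinh ψ).fun_pow 2
  have h2 := (h1.fun_inv (pow_ne_zero 2 hs)).fun_neg
  convert h2 using 1 <;> try rfl
  · funext s; rw [one_div]
  · field_simp

lemma deriv2_w14 (μ1 : ℝ) {ψ : ℝ} (hψ : ψ ≠ 0) (a : Fin 3) :
    deriv (fun s => deriv (fun t => w14 μ1 t a) s) ψ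
      = (if a = 0 then 0 else if a = 1 then ct (μ1/2) else -1) * (2*Real.cosh ψ/(Real.sinh ψ)^3) := by
  have hE : (fun s => deriv (fun t => w14 μ1 t a) s)
      =ᶠ[nhds ψ] (fun s => (if a = 0 then 0 else if a = 1 then ct (μ1/2) else -1) * (-(1/(Real.sinh s)^2))) := by
    filter_upwards [isOpen_compl_singleton.mem_nhds (by simpa using hψ : ψ ∈ ({0}ᶜ : Set ℝ))] with s hs
    exact (hasDerivAt_w14 μ1 (by simpa using hs) a).deriv
  rw [hE.deriv_eq]
  exact ((hasDerivAt_neg_inv_sinh_sq hψ).const_mul _).deriv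


lemma crossL_mul_self (x : V3) (k : ℝ) : crossL x (fun a => k * x a) = 0 := by
  funext a
  fin_cases a <;>
  · simp (config := {decide := true}) [crossL, eps, Fin.sum_univ_three, ηm]
    ring_nf

set_option maxHeartbeats 2000000 in
/-- the data w, m, q_ψ, q_α, q_θ of the gauge fixing of
Meusburger-Schönfeld satisfy 1 + w·w + 2q_ψ·∂_ψw = 0, ∂_ψw ∧ ∂_αm = 0,
∂_αm^a q_α^b = -½∂_ψw^a q_ψ^b and q_ψ·∂_ψm + q_θ·∂_αm + w·m = 0 for ψ ≠ 0. -/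
theorem stmt14 (μ1 μ2 s1 s2 : ℝ)
    (hμ1 : μ1 ∈ Set.Ioo 0 (2*π)) (hμ2 : μ2 ∈ Set.Ioo 0 (2*π)) :
    ∀ ψ : ℝ, ψ ≠ 0 → ∀ α : ℝ,
      (1 + mdot (w14 μ1 ψ) (w14 μ1 ψ)
          + 2 * mdot (qpsi14 μ1 μ2 ψ) (fun a => deriv (fun s => w14 μ1 s a) ψ) = 0) ∧
      (crossL (fun a => deriv (fun s => w14 μ1 s a) ψ)
          (fun a => deriv (fun s => m14 μ1 s1 ψ s a) α) = 0) ∧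
      (∀ a b : Fin 3, deriv (fun s => m14 μ1 s1 ψ s a) α * qalpha14 μ1 μ2 ψ b
          = -(1/2) * deriv (fun s => w14 μ1 s a) ψ * qpsi14 μ1 μ2 ψ b) ∧
      (mdot (qpsi14 μ1 μ2 ψ) (fun a => deriv (fun s => m14 μ1 s1 s α a) ψ)
        + mdot (qtheta14 μ1 μ2 s1 s2 ψ α) (fun a => deriv (fun s => m14 μ1 s1 ψ s a) α)
        + mdot (w14 μ1 ψ) (m14 μ1 s1 ψ α) = 0) := by
  intro ψ hψ α
  have hs : Real.sinh ψ ≠ 0 := Real.sinh_ne_zero.mpr hψ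
  have hch : Real.cosh ψ ^ 2 = Real.sinh ψ ^ 2 + 1 := Real.cosh_sq ψ
  have hS1 : Real.sin (μ1/2) ≠ 0 := by
    have h1 : 0 < μ1/2 := by linarith [hμ1.1]
    have h2 : μ1/2 < π := by linarith [hμ1.2]
    exact ne_of_gt (Real.sin_pos_of_pos_of_lt_pi h1 h2)
  -- first derivatives of w
  have hdw0 : deriv (fun s => w14 μ1 s 0) ψ = 0 := by
    simpa using (hasDerivAt_w14 μ1 hψ 0).deriv
  have hdw1 : deriv (fun s => w14 μ1 s 1) ψ = ct (μ1/2) * (-(1/(Real.sinh ψ)^2)) := by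
    simpa using (hasDerivAt_w14 μ1 hψ 1).deriv
  have hdw2 : deriv (fun s => w14 μ1 s 2) ψ = 1/(Real.sinh ψ)^2 := by
    simpa using (hasDerivAt_w14 μ1 hψ 2).deriv
  -- derivative of m in α
  have hma : ∀ a : Fin 3, deriv (fun s => m14 μ1 s1 ψ s a) α
      = 1/2 * deriv (fun t => w14 μ1 t a) ψ := by
    intro a
    have h1 : HasDerivAt (fun s : ℝ => s/2 * deriv (fun t => w14 μ1 t a) ψ)
        (1/2 * deriv (fun t => w14 μ1 t a) ψ) α := by
      simpa using ((hasDerivAt_id α).div_const 2).mul_const (deriv (fun t => w14 μ1 t a) ψ)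
    have h2 : HasDerivAt (fun s => m14 μ1 s1 ψ s a) (1/2 * deriv (fun t => w14 μ1 t a) ψ) α := by
      unfold m14
      exact h1.const_add _
    exact h2.deriv
  -- derivative of m in ψ, componentwise
  have hmem : ψ ∈ ({0}ᶜ : Set ℝ) := by simpa using hψ
  have hmψ0 : deriv (fun s => m14 μ1 s1 s α 0) ψ = 0 := by
    have hE : (fun s => m14 μ1 s1 s α 0)
        =ᶠ[nhds ψ] (fun _ => s1 / (4 * (Real.sin (μ1/2))^2)) := by
      filter_upwards [isOpen_compl_singleton.mem_nhds hmem] with s hs0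
      have := (hasDerivAt_w14 μ1 (by simpa using hs0) 0).deriv
      simp [m14, this]
    rw [hE.deriv_eq, deriv_const]
  have hmψ1 : deriv (fun s => m14 μ1 s1 s α 1) ψ
      = s1 * (-(1/(Real.sinh ψ)^2)) / (4 * (Real.sin (μ1/2))^2)
        + α/2 * (ct (μ1/2) * (2*Real.cosh ψ/(Real.sinh ψ)^3)) := by
    have hE : (fun s => m14 μ1 s1 s α 1)
        =ᶠ[nhds ψ] (fun s => s1 * cth s / (4 * (Real.sin (μ1/2))^2)
          + α/2 * (ct (μ1/2) * (-(1/(Real.sinh s)^2)))) := by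
      filter_upwards [isOpen_compl_singleton.mem_nhds hmem] with s hs0
      have := (hasDerivAt_w14 μ1 (by simpa using hs0) 1).deriv
      simp only [m14, this]
      norm_num
    rw [hE.deriv_eq]
    exact ((((hasDerivAt_cth hψ).const_mul s1).div_const _).add
      (((hasDerivAt_neg_inv_sinh_sq hψ).const_mul (ct (μ1/2))).const_mul (α/2))).deriv
  have hmψ2 : deriv (fun s => m14 μ1 s1 s α 2) ψ
      = α/2 * (-(2*Real.cosh ψ/(Real.sinh ψ)^3)) := by
    have hE : (fun s => m14 μ1 s1 s α 2)
        =ᶠ[nhds ψ] (fun s => α/2 * (-1 * (-(1/(Real.sinh s)^2)))) := by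
      filter_upwards [isOpen_compl_singleton.mem_nhds hmem] with s hs0
      have := (hasDerivAt_w14 μ1 (by simpa using hs0) 2).deriv
      simp [m14, this]
    rw [hE.deriv_eq]
    have := (((hasDerivAt_neg_inv_sinh_sq hψ).const_mul (-1 : ℝ)).const_mul (α/2)).deriv
    convert this using 2 <;> ring
  have hcth : cth ψ = Real.cosh ψ / Real.sinh ψ := rfl
  have hη0 : ηm 0 = 1 := rfl
  have hη1 : ηm 1 = -1 := rfl
  have hη2 : ηm 2 = -1 := rfl
  have hw0 : w14 μ1 ψ 0 = ct (μ1/2) := rfl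
  have hw1 : w14 μ1 ψ 1 = ct (μ1/2) * cth ψ := rfl
  have hw2 : w14 μ1 ψ 2 = -(cth ψ) := rfl
  have hq0 : qpsi14 μ1 μ2 ψ 0 = (1/2) * (cth ψ * ct (μ1/2) + ct (μ2/2) / Real.sinh ψ) := rfl
  have hq1 : qpsi14 μ1 μ2 ψ 1 = (1/2) * ct (μ1/2) := rfl
  have hq2 : qpsi14 μ1 μ2 ψ 2 = -(1/2) := rfl
  have ht0 : qtheta14 μ1 μ2 s1 s2 ψ α 0
      = s1 * cth ψ / (4 * (Real.sin (μ1/2))^2) + s2 / (4 * (Real.sin (μ2/2))^2 * Real.sinh ψ)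
        - α * (ct (μ1/2) + Real.cosh ψ * ct (μ2/2)) / (2 * (Real.sinh ψ)^2) := rfl
  have ht1 : qtheta14 μ1 μ2 s1 s2 ψ α 1 = s1 / (4 * (Real.sin (μ1/2))^2) := rfl
  have ht2 : qtheta14 μ1 μ2 s1 s2 ψ α 2 = 0 := rfl
  have hm0 : m14 μ1 s1 ψ α 0
      = s1 / (4 * (Real.sin (μ1/2))^2) + α/2 * deriv (fun s => w14 μ1 s 0) ψ := rfl
  have hm1 : m14 μ1 s1 ψ α 1
      = s1 * cth ψ / (4 * (Real.sin (μ1/2))^2) + α/2 * deriv (fun s => w14 μ1 s 1) ψ := rfl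
  have hm2 : m14 μ1 s1 ψ α 2 = 0 + α/2 * deriv (fun s => w14 μ1 s 2) ψ := rfl
  have hch2 : Real.cosh ψ^2/(Real.sinh ψ)^2 = 1 + 1/(Real.sinh ψ)^2 := by
    rw [hch]; field_simp
  refine ⟨?_, ?_, ?_, ?_⟩
  · simp only [mdot, Fin.sum_univ_three, hη0, hη1, hη2, hdw0, hdw1, hdw2,
      hw0, hw1, hw2, hq0, hq1, hq2, hcth]
    linear_combination (-(ct (μ1/2)^2 + 1)) * hch2
  · have hprop : (fun a => deriv (fun s => m14 μ1 s1 ψ s a) α)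
        = (fun a => (1/2 : ℝ) * deriv (fun s => w14 μ1 s a) ψ) := funext fun a => hma a
    rw [hprop]
    exact crossL_mul_self _ _
  · intro a b
    rw [hma a]
    simp only [qalpha14]
    ring
  · simp only [mdot, Fin.sum_univ_three, hma, hm0, hm1, hm2, hdw0, hdw1, hdw2,
      hmψ0, hmψ1, hmψ2, hw0, hw1, hw2, hq0, hq1, hq2, ht0, ht1, ht2,
      hη0, hη1, hη2, hcth]
    linear_combination (-(ct (μ1/2) * s1 / (4 * Real.sin (μ1/2)^2))) * hch2
end
end
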